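/- arXiv:0709.2326 — 6 statements merged into one kernel-verified Lean document; each statement's English description precedes it below -/
import Mathlib

section
/- Let n ≥ 1 and let Ω_1, Ω_0, Ω_{−1} be real symmetric 2n×2n matrices with Ω_1 positive semidefinite and −Ω_{−1} positive semidefinite. Let J be the 2n×2n real block matrix [[0, −I_n],[I_n, 0]]. Suppose v : (0,∞) → ℝ^{2n} is differentiable and satisfies v′(x) = J (x Ω_1 + Ω_0 + x^{−1} Ω_{−1}) v(x) for all x > 0, that v is bounded, that ∫_0^∞ ‖v(x)‖² dx < ∞ and ∫_0^∞ ‖v(x)/x‖² dx < ∞, and that ‖v(x)‖ → 0 as x → ∞. Then for all x, y > 0 with x ≠ y: ⟨J v(x), v(y)⟩/(x−y) = ∫_0^∞ [ ⟨Ω_1 v(x+t), v(y+t)⟩ − (1/((x+t)(y+t))) ⟨Ω_{−1} v(x+t), v(y+t)⟩ ] dt. -/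
/-!
Put `P(t) = ⟨J v(x+t), v(y+t)⟩` and `A(s) = sΩ₁ + Ω₀ + s⁻¹Ωₘ`. Since `Jᵀ = -J`, `J² = -1` and
`A(s)` is symmetric, the equation `v' = J A v` gives `P'(t) = ⟨(A(y+t) - A(x+t)) v(x+t), v(y+t)⟩`,
and `A(b) - A(a) = (b - a)(Ω₁ - (ab)⁻¹Ωₘ)`, so `P'` is `y - x` times the integrand. The integrand
is a sum of pairings of square-integrable functions, hence integrable, and `P(t) → 0` because `v`
decays, so the fundamental theorem of calculus on `(0, ∞)` gives `-P(0) = (y - x) ∫ integrand`.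
-/
open Matrix MeasureTheory Set Filter

open scoped InnerProductSpace in
lemma Matrix.mulVec_dotProduct_eq_inner {ι : Type*} [Fintype ι] [DecidableEq ι]
    (M : Matrix ι ι ℝ) (a b : EuclideanSpace ℝ ι) :
    (M *ᵥ a) ⬝ᵥ b = ⟪b, toEuclideanCLM (𝕜 := ℝ) M a⟫_ℝ := by
  rw [inner_toEuclideanCLM, dotProduct_comm]

lemma Matrix.smul_add_add_inv_smul_sub {m : Type*} (Ω₁ Ω₀ Ωₘ : Matrix m m ℝ) {a b : ℝ}
    (ha : a ≠ 0) (hb : b ≠ 0) :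
    (b • Ω₁ + Ω₀ + b⁻¹ • Ωₘ) - (a • Ω₁ + Ω₀ + a⁻¹ • Ωₘ) = (b - a) • (Ω₁ - (a * b)⁻¹ • Ωₘ) := by
  have : (b - a) * (a * b)⁻¹ = a⁻¹ - b⁻¹ := by field_simp
  rw [smul_sub, smul_smul, this]
  module

lemma Matrix.J_mulVec_dotProduct_J_mulVec {l : Type*} [Fintype l] [DecidableEq l]
    (a b : l ⊕ l → ℝ) : (J l ℝ *ᵥ a) ⬝ᵥ (J l ℝ *ᵥ b) = a ⬝ᵥ b := by
  rw [dotProduct_mulVec, ← mulVec_transpose, mulVec_mulVec, J_transpose, neg_mul, J_squared,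
    neg_neg, one_mulVec]

lemma Matrix.hasDerivAt_J_mulVec_dotProduct {l : Type*} [Fintype l] [DecidableEq l]
    {u w : ℝ → EuclideanSpace ℝ (l ⊕ l)} {A B : Matrix (l ⊕ l) (l ⊕ l) ℝ} {t : ℝ}
    (hu : HasDerivAt u (WithLp.toLp 2 (J l ℝ *ᵥ (A *ᵥ u t))) t)
    (hw : HasDerivAt w (WithLp.toLp 2 (J l ℝ *ᵥ (B *ᵥ w t))) t) :
    HasDerivAt (fun s => (J l ℝ *ᵥ u s) ⬝ᵥ w s) (((Bᵀ - A) *ᵥ u t) ⬝ᵥ w t) t := by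
  have h := hw.inner ℝ ((toEuclideanCLM (𝕜 := ℝ) (J l ℝ)).hasFDerivAt.comp_hasDerivAt t hu)
  simp only [Function.comp_def, ← mulVec_dotProduct_eq_inner] at h
  refine h.congr_deriv ?_
  rw [mulVec_mulVec, J_squared, J_mulVec_dotProduct_J_mulVec,
    sub_mulVec, sub_dotProduct, mulVec_transpose, ← dotProduct_mulVec, neg_mulVec, one_mulVec,
    neg_dotProduct, neg_add_eq_sub]

lemma Matrix.tendsto_mulVec_dotProduct_zero {α ι : Type*} [Fintype ι] [DecidableEq ι]
    {l : Filter α} (M : Matrix ι ι ℝ) {u w : α → EuclideanSpace ℝ ι}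
    (hu : Tendsto u l (nhds 0)) (hw : Tendsto w l (nhds 0)) :
    Tendsto (fun a => (M *ᵥ u a) ⬝ᵥ w a) l (nhds 0) := by
  simp_rw [mulVec_dotProduct_eq_inner]
  simpa using hw.inner (𝕜 := ℝ) (((toEuclideanCLM (𝕜 := ℝ) M).continuous.tendsto 0).comp hu)

lemma MeasureTheory.MemLp.comp_const_add_Ioi {E : Type*} [NormedAddCommGroup E] {p : ENNReal}
    {f : ℝ → E} (hf : MemLp f p (volume.restrict (Ioi 0))) {c : ℝ} (hc : 0 ≤ c) :
    MemLp (fun t => f (c + t)) p (volume.restrict (Ioi 0)) := by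
  have hshift : MeasurePreserving (c + ·) (volume.restrict (Ioi 0)) (volume.restrict (Ioi c)) := by
    simpa using (measurePreserving_add_left volume c).restrict_preimage_emb
      (measurableEmbedding_addLeft c) (Ioi c)
  exact (hf.mono_measure (Measure.restrict_mono (Ioi_subset_Ioi hc) le_rfl)).comp_measurePreserving
    hshift

lemma MeasureTheory.MemLp.integrable_mulVec_dotProduct {α ι : Type*} [MeasurableSpace α]
    {μ : Measure α} [Fintype ι] [DecidableEq ι] (M : Matrix ι ι ℝ) {u w : α → EuclideanSpace ℝ ι}
    (hu : MemLp u 2 μ) (hw : MemLp w 2 μ) :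
    Integrable (fun a => (M *ᵥ u a) ⬝ᵥ w a) μ := by
  have hMu : MemLp (fun a => toEuclideanCLM (𝕜 := ℝ) M (u a)) 2 μ :=
    (toEuclideanCLM (𝕜 := ℝ) M).comp_memLp' hu
  simp_rw [mulVec_dotProduct_eq_inner]
  refine (L2.integrable_inner (hw.toLp w) (hMu.toLp _)).congr ?_
  filter_upwards [hw.coeFn_toLp, hMu.coeFn_toLp] with a hwa hua
  rw [hwa, hua]

section CanonicalSystem

variable {ι : Type*} [Fintype ι] [DecidableEq ι] {Ω₁ Ω₀ Ωₘ : Matrix (ι ⊕ ι) (ι ⊕ ι) ℝ}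
  {v : ℝ → EuclideanSpace ℝ (ι ⊕ ι)}

lemma hasDerivAt_J_mulVec_dotProduct_comp_const_add
    (h₁ : Ω₁.IsSymm) (h₀ : Ω₀.IsSymm) (hₘ : Ωₘ.IsSymm)
    (hode : ∀ x : ℝ, 0 < x →
      HasDerivAt v (WithLp.toLp 2 (J ι ℝ *ᵥ ((x • Ω₁ + Ω₀ + x⁻¹ • Ωₘ) *ᵥ v x))) x)
    {x y t : ℝ} (hx : 0 < x + t) (hy : 0 < y + t) :
    HasDerivAt (fun s => (J ι ℝ *ᵥ v (x + s)) ⬝ᵥ v (y + s))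
      ((y - x) * ((Ω₁ *ᵥ v (x + t)) ⬝ᵥ v (y + t)
        - (1 / ((x + t) * (y + t))) * ((Ωₘ *ᵥ v (x + t)) ⬝ᵥ v (y + t)))) t := by
  have hsymm : ((y + t) • Ω₁ + Ω₀ + (y + t)⁻¹ • Ωₘ).IsSymm :=
    ((h₁.smul _).add h₀).add (hₘ.smul _)
  refine (hasDerivAt_J_mulVec_dotProduct ((hode _ hx).comp_const_add x t)
    ((hode _ hy).comp_const_add y t)).congr_deriv ?_
  rw [hsymm.eq, smul_add_add_inv_smul_sub _ _ _ hx.ne' hy.ne', smul_mulVec, smul_dotProduct,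
    sub_mulVec, sub_dotProduct, smul_mulVec, smul_dotProduct, add_sub_add_right_eq_sub, one_div,
    smul_eq_mul, smul_eq_mul]

lemma integrableOn_hankel_integrand
    (hv : MemLp v 2 (volume.restrict (Ioi 0)))
    (hv' : MemLp (fun s => s⁻¹ • v s) 2 (volume.restrict (Ioi 0))) {x y : ℝ}
    (hx : 0 ≤ x) (hy : 0 ≤ y) :
    IntegrableOn (fun t => (Ω₁ *ᵥ v (x + t)) ⬝ᵥ v (y + t)
      - (1 / ((x + t) * (y + t))) * ((Ωₘ *ᵥ v (x + t)) ⬝ᵥ v (y + t))) (Ioi 0) := by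
  have hweighted : ∀ t, (1 / ((x + t) * (y + t))) * ((Ωₘ *ᵥ v (x + t)) ⬝ᵥ v (y + t))
      = (Ωₘ *ᵥ ((x + t)⁻¹ • v (x + t))) ⬝ᵥ ((y + t)⁻¹ • v (y + t)) := fun t => by
    simp only [mulVec_smul, smul_dotProduct, dotProduct_smul, smul_eq_mul]
    field_simp
  simp_rw [hweighted]
  exact ((hv.comp_const_add_Ioi hx).integrable_mulVec_dotProduct Ω₁ (hv.comp_const_add_Ioi hy)).sub
    ((hv'.comp_const_add_Ioi hx).integrable_mulVec_dotProduct Ωₘ (hv'.comp_const_add_Ioi hy))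

end CanonicalSystem

theorem integrable_kernel_hankel_factorization_general
    (n : ℕ)
    (Ω₁ Ω₀ Ωₘ : Matrix (Fin n ⊕ Fin n) (Fin n ⊕ Fin n) ℝ)
    (hΩ₁symm : Ω₁.IsSymm) (hΩ₀symm : Ω₀.IsSymm) (hΩₘsymm : Ωₘ.IsSymm)
    (J : Matrix (Fin n ⊕ Fin n) (Fin n ⊕ Fin n) ℝ)
    (hJ : J = Matrix.fromBlocks 0 (-1) 1 0)
    (v : ℝ → EuclideanSpace ℝ (Fin n ⊕ Fin n))
    (hode : ∀ x : ℝ, 0 < x →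
      HasDerivAt v (WithLp.toLp 2 (J.mulVec ((x • Ω₁ + Ω₀ + x⁻¹ • Ωₘ).mulVec (v x)))) x)
    (hL2 : IntegrableOn (fun x => ‖v x‖ ^ 2) (Ioi (0 : ℝ)))
    (hL2' : IntegrableOn (fun x => ‖(x : ℝ)⁻¹ • v x‖ ^ 2) (Ioi (0 : ℝ)))
    (hdecay : Tendsto (fun x => ‖v x‖) atTop (nhds 0)) :
    ∀ x y : ℝ, 0 < x → 0 < y → x ≠ y →
      (J.mulVec (v x)) ⬝ᵥ (v y) / (x - y) =
        ∫ t in Ioi (0 : ℝ),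
          ((Ω₁.mulVec (v (x + t))) ⬝ᵥ (v (y + t))
            - (1 / ((x + t) * (y + t))) * ((Ωₘ.mulVec (v (x + t))) ⬝ᵥ (v (y + t)))) := by
  -- `Matrix.J` is by definition this block matrix.
  obtain rfl : J = Matrix.J (Fin n) ℝ := hJ
  intro x y hx hy hxy
  have hv : ContinuousOn v (Ioi 0) := fun s hs => (hode s hs).continuousAt.continuousWithinAt
  have hmem : MemLp v 2 (volume.restrict (Ioi 0)) :=
    (memLp_two_iff_integrable_sq_norm (hv.aestronglyMeasurable measurableSet_Ioi)).2 hL2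
  have hmem' : MemLp (fun s => s⁻¹ • v s) 2 (volume.restrict (Ioi 0)) :=
    (memLp_two_iff_integrable_sq_norm (((continuousOn_inv₀.mono fun s hs => ne_of_gt hs).smul
      hv).aestronglyMeasurable measurableSet_Ioi)).2 hL2'
  have hlim (c : ℝ) : Tendsto (fun t => v (c + t)) atTop (nhds 0) :=
    (tendsto_zero_iff_norm_tendsto_zero.2 hdecay).comp
      (tendsto_atTop_add_const_left _ c tendsto_id)
  have hderiv (t : ℝ) (ht : 0 ≤ t) := hasDerivAt_J_mulVec_dotProduct_comp_const_add
    hΩ₁symm hΩ₀symm hΩₘsymm hode (x := x) (y := y) (t := t) (by linarith) (by linarith)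
  have hFTC := integral_Ioi_of_hasDerivAt_of_tendsto
    (hderiv 0 le_rfl).continuousAt.continuousWithinAt (fun t ht => hderiv t (le_of_lt ht))
    ((integrableOn_hankel_integrand hmem hmem' hx.le hy.le).const_mul (y - x))
    (tendsto_mulVec_dotProduct_zero _ (hlim x) (hlim y))
  rw [integral_const_mul, add_zero, add_zero] at hFTC
  rw [div_eq_iff (sub_ne_zero.2 hxy)]
  linarith

/-- Factorization of the integrable kernel `⟨J v(x), v(y)⟩/(x−y)` arising
from the differential equation `v′(x) = J(xΩ₁ + Ω₀ + x⁻¹Ω₋₁)v(x)` with `Ω₁ ⪰ 0` and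
`−Ω₋₁ ⪰ 0`, as the kernel of `Γ_φ*Γ_φ`. -/
theorem integrable_kernel_hankel_factorization
    (n : ℕ) (hn : 1 ≤ n)
    (Ω₁ Ω₀ Ωₘ : Matrix (Fin n ⊕ Fin n) (Fin n ⊕ Fin n) ℝ)
    (hΩ₁symm : Ω₁.IsSymm) (hΩ₀symm : Ω₀.IsSymm) (hΩₘsymm : Ωₘ.IsSymm)
    (hΩ₁pos : Ω₁.PosSemidef) (hΩₘneg : (-Ωₘ).PosSemidef)
    (J : Matrix (Fin n ⊕ Fin n) (Fin n ⊕ Fin n) ℝ)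
    (hJ : J = Matrix.fromBlocks 0 (-1) 1 0)
    (v : ℝ → EuclideanSpace ℝ (Fin n ⊕ Fin n))
    (hode : ∀ x : ℝ, 0 < x →
      HasDerivAt v (WithLp.toLp 2 (J.mulVec ((x • Ω₁ + Ω₀ + x⁻¹ • Ωₘ).mulVec (v x)))) x)
    (hbdd : ∃ C : ℝ, ∀ x : ℝ, 0 < x → ‖v x‖ ≤ C)
    (hL2 : IntegrableOn (fun x => ‖v x‖ ^ 2) (Ioi (0 : ℝ)))
    (hL2' : IntegrableOn (fun x => ‖(x : ℝ)⁻¹ • v x‖ ^ 2) (Ioi (0 : ℝ)))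
    (hdecay : Tendsto (fun x => ‖v x‖) atTop (nhds 0)) :
    ∀ x y : ℝ, 0 < x → 0 < y → x ≠ y →
      (J.mulVec (v x)) ⬝ᵥ (v y) / (x - y) =
        ∫ t in Ioi (0 : ℝ),
          ((Ω₁.mulVec (v (x + t))) ⬝ᵥ (v (y + t))
            - (1 / ((x + t) * (y + t))) * ((Ωₘ.mulVec (v (x + t))) ⬝ᵥ (v (y + t)))) :=
  integrable_kernel_hankel_factorization_general n Ω₁ Ω₀ Ωₘ hΩ₁symm hΩ₀symm hΩₘsymm J hJ v hode hL2
    hL2' hdecay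
end

section
/- Let n ≥ 1 and let Ω_1, Ω_0, Ω_{−1} be real symmetric 2n×2n matrices with Ω_1 positive semidefinite, −Ω_{−1} positive semidefinite, and rank(Ω_1) + rank(Ω_{−1}) = 1. Let J be the 2n×2n real block matrix [[0, −I_n],[I_n, 0]]. Suppose v : (0,∞) → ℝ^{2n} is differentiable and satisfies v′(x) = J (x Ω_1 + Ω_0 + x^{−1} Ω_{−1}) v(x) for all x > 0, that v is bounded, that ∫_0^∞ ‖v(x)‖² dx < ∞ and ∫_0^∞ ‖v(x)/x‖² dx < ∞, and that ‖v(x)‖ → 0 as x → ∞. Then there exists a measurable function ψ : (0,∞) → ℝ with ∫_0^∞ ψ(x)² dx < ∞ such that for all x, y > 0 with x ≠ y: ⟨J v(x), v(y)⟩/(x−y) = ∫_0^∞ ψ(x+t) ψ(y+t) dt. -/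
/-!
Since `Jᵀ J = 1`, `J² = -1` and `Ω₀` is symmetric, the equation `v' = J(xΩ₁ + Ω₀ + x⁻¹Ωₘ)v`
gives, with `a = x + t` and `b = y + t`,
`d/dt ⟨J v(a), v(b)⟩ = (y - x) (⟨Ω₁ v(a), v(b)⟩ + ⟨-Ωₘ v(a)/a, v(b)/b⟩)`:
the `Ω₀` terms cancel. As `Ω₁` and `-Ωₘ` are positive semidefinite with ranks adding up to one,
one of them vanishes and the other is `w wᵀ`, so the bracket is `ψ(a) ψ(b)` with
`ψ(s) = ⟨v(s), w⟩` or `⟨v(s), w⟩ / s`, square integrable by the `L²` hypotheses.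
Integrating over `t ∈ (0, ∞)` and using `⟨J v(a), v(b)⟩ → 0` gives
`⟨J v(x), v(y)⟩ = (x - y) ∫₀^∞ ψ(x+t) ψ(y+t) dt`.
-/

open Matrix MeasureTheory Set Filter
open scoped RealInnerProductSpace Topology

namespace Matrix

variable {ι : Type*} [Fintype ι]

theorem rank_eq_zero_iff {K m n : Type*} [Field K] [Fintype n] [DecidableEq n]
    {M : Matrix m n K} : M.rank = 0 ↔ M = 0 := by
  rw [rank, Submodule.finrank_eq_zero, LinearMap.range_eq_bot, ← toLin'_apply',
    LinearEquiv.map_eq_zero_iff]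

theorem rank_neg {K m n : Type*} [CommRing K] [Fintype n] (M : Matrix m n K) :
    (-M).rank = M.rank := by
  have h : (-M).mulVecLin = -M.mulVecLin := LinearMap.ext fun x => neg_mulVec x M
  rw [rank, rank, h, LinearMap.range_neg]

theorem PosSemidef.exists_eq_vecMulVec_of_rank_eq_one [DecidableEq ι] {M : Matrix ι ι ℝ}
    (hM : M.PosSemidef) (hr : M.rank = 1) : ∃ w : ι → ℝ, M = vecMulVec w w := by
  obtain ⟨k, hk⟩ : ∃ k, ∀ i, hM.1.eigenvalues i ≠ 0 → i = k := by
    rw [hM.1.rank_eq_card_non_zero_eigs, Fintype.card_eq_one_iff] at hr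
    obtain ⟨⟨k, _⟩, hk⟩ := hr
    exact ⟨k, fun i hi => congrArg Subtype.val (hk ⟨i, hi⟩)⟩
  refine ⟨√(hM.1.eigenvalues k) • ⇑(hM.1.eigenvectorBasis k), ?_⟩
  conv_lhs => rw [hM.1.spectral_theorem]
  ext i j
  have hsq := Real.mul_self_sqrt (hM.eigenvalues_nonneg k)
  simp only [Unitary.conjStarAlgAut_apply, mul_apply, diagonal, of_apply, star_apply,
    IsHermitian.eigenvectorUnitary_apply, RCLike.ofReal_real_eq_id, Function.comp_apply, id_eq,
    mul_ite, mul_zero, Finset.sum_ite_eq', Finset.mem_univ, if_true, star_trivial, vecMulVec_apply,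
    Pi.smul_apply, smul_eq_mul]
  rw [Finset.sum_eq_single k (fun l _ hl => by simp [not_imp_comm.mp (hk l) hl]) (by simp)]
  linear_combination (⇑(hM.1.eigenvectorBasis k) i * ⇑(hM.1.eigenvectorBasis k) j) * hsq.symm

theorem exists_eq_vecMulVec_of_rank_add_rank_eq_one [DecidableEq ι] {P Q : Matrix ι ι ℝ}
    (hP : P.PosSemidef) (hQ : Q.PosSemidef) (h : P.rank + Q.rank = 1) :
    ∃ w₁ w₂ : ι → ℝ, P = vecMulVec w₁ w₁ ∧ Q = vecMulVec w₂ w₂ ∧ (w₁ = 0 ∨ w₂ = 0) := by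
  rcases Nat.add_eq_one_iff.mp h with ⟨hP0, hQ1⟩ | ⟨hP1, hQ0⟩
  · obtain ⟨w, rfl⟩ := hQ.exists_eq_vecMulVec_of_rank_eq_one hQ1
    exact ⟨0, w, by simpa using rank_eq_zero_iff.mp hP0, rfl, .inl rfl⟩
  · obtain ⟨w, rfl⟩ := hP.exists_eq_vecMulVec_of_rank_eq_one hP1
    exact ⟨w, 0, rfl, by simpa using rank_eq_zero_iff.mp hQ0, .inr rfl⟩

theorem hasDerivAt_mulVec_dotProduct [DecidableEq ι] (M : Matrix ι ι ℝ)
    {f g : ℝ → EuclideanSpace ℝ ι} {f' g' : EuclideanSpace ℝ ι} {t : ℝ}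
    (hf : HasDerivAt f f' t) (hg : HasDerivAt g g' t) :
    HasDerivAt (fun s => (M *ᵥ f s) ⬝ᵥ g s) ((M *ᵥ f') ⬝ᵥ g t + (M *ᵥ f t) ⬝ᵥ g') t := by
  have h_inner (u w : EuclideanSpace ℝ ι) :
      (M *ᵥ u) ⬝ᵥ w = ⟪w, toEuclideanCLM (𝕜 := ℝ) M u⟫ := by
    simp [EuclideanSpace.inner_eq_star_dotProduct, ofLp_toEuclideanCLM]
  simp_rw [h_inner]
  exact hg.inner ℝ ((toEuclideanCLM (𝕜 := ℝ) M).hasFDerivAt.comp_hasDerivAt t hf)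

theorem hasDerivAt_mulVec_dotProduct_of_hamiltonian [DecidableEq ι] {J A B : Matrix ι ι ℝ}
    (hJJ : J * J = -1) (hJTJ : Jᵀ * J = 1) (hB : B.IsSymm) {f g : ℝ → EuclideanSpace ℝ ι}
    {t : ℝ} (hf : HasDerivAt f (WithLp.toLp 2 (J *ᵥ (A *ᵥ f t))) t)
    (hg : HasDerivAt g (WithLp.toLp 2 (J *ᵥ (B *ᵥ g t))) t) :
    HasDerivAt (fun s => (J *ᵥ f s) ⬝ᵥ g s) (((B - A) *ᵥ f t) ⬝ᵥ g t) t := by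
  convert hasDerivAt_mulVec_dotProduct J hf hg using 1
  rw [mulVec_mulVec, hJJ, neg_mulVec, one_mulVec, dotProduct_mulVec, ← mulVec_transpose,
    mulVec_mulVec, hJTJ, one_mulVec, dotProduct_mulVec, ← mulVec_transpose, hB.eq,
    sub_mulVec, sub_dotProduct, neg_dotProduct, sub_eq_neg_add]

theorem sub_mulVec_dotProduct_of_rank_one (Ω₀ : Matrix ι ι ℝ) {w₁ w₂ : ι → ℝ}
    (hw : w₁ = 0 ∨ w₂ = 0) {a b : ℝ} (ha : a ≠ 0) (hb : b ≠ 0) (u u' : ι → ℝ) :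
    (((b • vecMulVec w₁ w₁ + Ω₀ + b⁻¹ • -vecMulVec w₂ w₂) -
        (a • vecMulVec w₁ w₁ + Ω₀ + a⁻¹ • -vecMulVec w₂ w₂)) *ᵥ u) ⬝ᵥ u' =
      (b - a) * ((u ⬝ᵥ w₁ + a⁻¹ * (u ⬝ᵥ w₂)) * (u' ⬝ᵥ w₁ + b⁻¹ * (u' ⬝ᵥ w₂))) := by
  rcases hw with rfl | rfl
  · simp only [vecMulVec_zero, smul_zero, zero_add, smul_neg, add_sub_add_left_eq_sub,
      sub_neg_eq_add, add_mulVec, neg_mulVec, smul_mulVec, vecMulVec_mulVec, op_smul_eq_smul,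
      add_dotProduct, neg_dotProduct, smul_dotProduct, smul_eq_mul, dotProduct_comm u,
      zero_dotProduct, dotProduct_comm u']
    field_simp
    ring
  · simp only [vecMulVec_zero, neg_zero, smul_zero, add_zero, add_sub_add_right_eq_sub,
      sub_mulVec, smul_mulVec, vecMulVec_mulVec, op_smul_eq_smul, sub_dotProduct,
      smul_dotProduct, smul_eq_mul, dotProduct_comm u, zero_dotProduct, mul_zero,
      dotProduct_comm u']
    ring

theorem norm_toLp_mulVec [DecidableEq ι] {J : Matrix ι ι ℝ} (hJ : Jᵀ * J = 1)
    (u : EuclideanSpace ℝ ι) : ‖WithLp.toLp 2 (J *ᵥ u)‖ = ‖u‖ := by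
  rw [← sq_eq_sq₀ (norm_nonneg _) (norm_nonneg _), ← real_inner_self_eq_norm_sq,
    ← real_inner_self_eq_norm_sq, EuclideanSpace.inner_toLp_toLp,
    EuclideanSpace.inner_eq_star_dotProduct, star_trivial, star_trivial, dotProduct_mulVec,
    ← mulVec_transpose, mulVec_mulVec, hJ, one_mulVec]

theorem abs_mulVec_dotProduct_le [DecidableEq ι] {J : Matrix ι ι ℝ} (hJ : Jᵀ * J = 1)
    (u w : EuclideanSpace ℝ ι) : |(J *ᵥ u) ⬝ᵥ w| ≤ ‖u‖ * ‖w‖ := by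
  have h := abs_real_inner_le_norm w (WithLp.toLp 2 (J *ᵥ u))
  rwa [norm_toLp_mulVec hJ, EuclideanSpace.inner_eq_star_dotProduct, star_trivial,
    mul_comm] at h

theorem tendsto_mulVec_dotProduct_comp_add_atTop [DecidableEq ι] {J : Matrix ι ι ℝ}
    (hJ : Jᵀ * J = 1) {v : ℝ → EuclideanSpace ℝ ι} (hv : Tendsto (fun x => ‖v x‖) atTop (𝓝 0))
    (x y : ℝ) :
    Tendsto (fun t => (J *ᵥ v (x + t)) ⬝ᵥ v (y + t)) atTop (𝓝 0) := by
  have h_shift (a : ℝ) : Tendsto (fun t => ‖v (a + t)‖) atTop (𝓝 0) :=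
    hv.comp (tendsto_atTop_add_const_left atTop a tendsto_id)
  exact squeeze_zero_norm (fun t => abs_mulVec_dotProduct_le hJ _ _)
    (by simpa using (h_shift x).mul (h_shift y))

end Matrix

theorem integrableOn_Ioi_comp_const_add_iff {E : Type*} [NormedAddCommGroup E] (f : ℝ → E)
    (a c : ℝ) : IntegrableOn (fun x => f (a + x)) (Ioi c) ↔ IntegrableOn f (Ioi (a + c)) := by
  simpa [preimage_const_add_Ioi, Function.comp_def] using
    (measurePreserving_add_left volume a).integrableOn_comp_preimage
      (measurableEmbedding_addLeft a) (f := f) (s := Ioi (a + c))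

theorem integrableOn_mul_comp_const_add {ψ : ℝ → ℝ} (hψ : Measurable ψ)
    (hψ2 : IntegrableOn (fun s => ψ s ^ 2) (Ioi 0)) {x y : ℝ} (hx : 0 ≤ x) (hy : 0 ≤ y) :
    IntegrableOn (fun t => ψ (x + t) * ψ (y + t)) (Ioi 0) := by
  have h_memLp {a : ℝ} (ha : 0 ≤ a) :
      MemLp (fun t => ψ (a + t)) 2 (volume.restrict (Ioi 0)) := by
    refine (memLp_two_iff_integrable_sq
      (hψ.comp (measurable_const_add a)).aestronglyMeasurable).2 ?_
    refine (integrableOn_Ioi_comp_const_add_iff (fun s => ψ s ^ 2) a 0).2 ?_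
    exact hψ2.mono_set (Ioi_subset_Ioi (by linarith))
  exact (h_memLp hx).integrable_mul (h_memLp hy)

theorem div_sub_eq_integral_of_hasDerivAt {K : ℝ → ℝ → ℝ} {ψ : ℝ → ℝ} {x y : ℝ} (hxy : x ≠ y)
    (hK : ∀ t ∈ Ici (0 : ℝ),
      HasDerivAt (fun s => K (x + s) (y + s)) ((y - x) * (ψ (x + t) * ψ (y + t))) t)
    (hψ : IntegrableOn (fun t => ψ (x + t) * ψ (y + t)) (Ioi 0))
    (hK_lim : Tendsto (fun t => K (x + t) (y + t)) atTop (𝓝 0)) :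
    K x y / (x - y) = ∫ t in Ioi (0 : ℝ), ψ (x + t) * ψ (y + t) := by
  have h := integral_Ioi_of_hasDerivAt_of_tendsto' hK (hψ.const_mul (y - x)) hK_lim
  rw [integral_const_mul, add_zero, add_zero] at h
  rw [div_eq_iff (sub_ne_zero.mpr hxy)]
  linear_combination h

section HankelSymbol

variable {ι : Type*} [Fintype ι]

/-- `ψ` with `⟨φ(s), φ(s')⟩ = ψ(s) ψ(s')` for the paper's `φ(s) = (√Ω₁ v(s), √(-Ωₘ) v(s)/s)`
when `Ω₁ = w₁ w₁ᵀ`, `-Ωₘ = w₂ w₂ᵀ` and `w₁ = 0` or `w₂ = 0`. It is set to `0` on `s ≤ 0`, where `v`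
need not even be measurable. -/
noncomputable def hankelSymbol (w₁ w₂ : ι → ℝ) (v : ℝ → EuclideanSpace ℝ ι) : ℝ → ℝ :=
  (Ioi 0).indicator fun s => v s ⬝ᵥ w₁ + s⁻¹ * (v s ⬝ᵥ w₂)

variable {w₁ w₂ : ι → ℝ} {v : ℝ → EuclideanSpace ℝ ι}

theorem hankelSymbol_of_pos {s : ℝ} (hs : 0 < s) :
    hankelSymbol w₁ w₂ v s = v s ⬝ᵥ w₁ + s⁻¹ * (v s ⬝ᵥ w₂) :=
  indicator_of_mem hs _

theorem measurable_hankelSymbol (hv : ContinuousOn v (Ioi 0)) :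
    Measurable (hankelSymbol w₁ w₂ v) := by
  classical
  have hdot (w : ι → ℝ) : ContinuousOn (fun s => v s ⬝ᵥ w) (Ioi 0) :=
    ((PiLp.continuous_ofLp 2 _).dotProduct continuous_const).comp_continuousOn hv
  rw [hankelSymbol, ← piecewise_eq_indicator]
  exact ((hdot w₁).add ((continuousOn_inv₀.mono fun _ hs => ne_of_gt hs).mul (hdot w₂)))
    |>.measurable_piecewise continuousOn_const measurableSet_Ioi

theorem integrableOn_hankelSymbol_sq (hv : ContinuousOn v (Ioi 0))
    (hL2 : IntegrableOn (fun x => ‖v x‖ ^ 2) (Ioi 0))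
    (hL2' : IntegrableOn (fun x => ‖x⁻¹ • v x‖ ^ 2) (Ioi 0)) :
    IntegrableOn (fun s => hankelSymbol w₁ w₂ v s ^ 2) (Ioi 0) := by
  have hv_meas : AEStronglyMeasurable v (volume.restrict (Ioi 0)) :=
    hv.aestronglyMeasurable measurableSet_Ioi
  have hv'_meas : AEStronglyMeasurable (fun x => x⁻¹ • v x) (volume.restrict (Ioi (0 : ℝ))) :=
    ((continuousOn_inv₀.mono fun _ hx => ne_of_gt hx).smul hv).aestronglyMeasurable
      measurableSet_Ioi
  have h := (((memLp_two_iff_integrable_sq_norm hv_meas).2 hL2).const_inner (𝕜 := ℝ)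
    (WithLp.toLp 2 w₁)).add
      (((memLp_two_iff_integrable_sq_norm hv'_meas).2 hL2').const_inner (WithLp.toLp 2 w₂))
  rw [memLp_two_iff_integrable_sq h.1] at h
  refine (integrable_congr ((ae_restrict_iff' measurableSet_Ioi).2
    (ae_of_all _ fun s (hs : 0 < s) => ?_))).1 h
  simp [hankelSymbol_of_pos hs, EuclideanSpace.inner_eq_star_dotProduct, inner_smul_right]

end HankelSymbol

theorem integrable_kernel_hankel_square_general
    (n : ℕ)
    (Ω₁ Ω₀ Ωₘ : Matrix (Fin n ⊕ Fin n) (Fin n ⊕ Fin n) ℝ)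
    (hΩ₀symm : Ω₀.IsSymm)
    (hΩ₁pos : Ω₁.PosSemidef) (hΩₘneg : (-Ωₘ).PosSemidef)
    (hrank : Ω₁.rank + Ωₘ.rank = 1)
    (J : Matrix (Fin n ⊕ Fin n) (Fin n ⊕ Fin n) ℝ)
    (hJ : J = Matrix.fromBlocks 0 (-1) 1 0)
    (v : ℝ → EuclideanSpace ℝ (Fin n ⊕ Fin n))
    (hode : ∀ x : ℝ, 0 < x →
      HasDerivAt v (WithLp.toLp 2 (J.mulVec ((x • Ω₁ + Ω₀ + x⁻¹ • Ωₘ).mulVec (v x)))) x)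
    (hL2 : IntegrableOn (fun x => ‖v x‖ ^ 2) (Ioi (0 : ℝ)))
    (hL2' : IntegrableOn (fun x => ‖(x : ℝ)⁻¹ • v x‖ ^ 2) (Ioi (0 : ℝ)))
    (hdecay : Tendsto (fun x => ‖v x‖) atTop (nhds 0)) :
    ∃ ψ : ℝ → ℝ, Measurable ψ ∧ IntegrableOn (fun x => ψ x ^ 2) (Ioi (0 : ℝ)) ∧
      ∀ x y : ℝ, 0 < x → 0 < y → x ≠ y →
        (J.mulVec (v x)) ⬝ᵥ (v y) / (x - y) =
          ∫ t in Ioi (0 : ℝ), ψ (x + t) * ψ (y + t) := by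
  have hJJ : J * J = -1 := by rw [hJ]; exact J_squared (Fin n) ℝ
  have hJTJ : Jᵀ * J = 1 := by
    rw [show Jᵀ = -J by rw [hJ]; exact J_transpose (Fin n) ℝ, neg_mul, hJJ, neg_neg]
  obtain ⟨w₁, w₂, rfl, hΩₘ, hw⟩ :=
    exists_eq_vecMulVec_of_rank_add_rank_eq_one hΩ₁pos hΩₘneg (by rwa [rank_neg])
  obtain rfl : Ωₘ = -vecMulVec w₂ w₂ := neg_eq_iff_eq_neg.mp hΩₘ
  have hv : ContinuousOn v (Ioi 0) := fun s hs => (hode s hs).continuousAt.continuousWithinAt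
  have hψ_meas := measurable_hankelSymbol (w₁ := w₁) (w₂ := w₂) hv
  have hψ_sq := integrableOn_hankelSymbol_sq (w₁ := w₁) (w₂ := w₂) hv hL2 hL2'
  refine ⟨hankelSymbol w₁ w₂ v, hψ_meas, hψ_sq, fun x y hx hy hxy => ?_⟩
  refine div_sub_eq_integral_of_hasDerivAt (K := fun a b => (J *ᵥ v a) ⬝ᵥ v b) hxy
    (fun t (ht : 0 ≤ t) => ?_) (integrableOn_mul_comp_const_add hψ_meas hψ_sq hx.le hy.le)
    (tendsto_mulVec_dotProduct_comp_add_atTop hJTJ hdecay x y)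
  have hxt : 0 < x + t := by linarith
  have hyt : 0 < y + t := by linarith
  have hB : ((y + t) • vecMulVec w₁ w₁ + Ω₀ + (y + t)⁻¹ • -vecMulVec w₂ w₂).IsSymm :=
    ((IsSymm.smul (transpose_vecMulVec w₁ w₁) _).add hΩ₀symm).add
      (IsSymm.smul (IsSymm.neg (transpose_vecMulVec w₂ w₂)) _)
  have h := hasDerivAt_mulVec_dotProduct_of_hamiltonian hJJ hJTJ hB
    ((hode _ hxt).comp_const_add x t) ((hode _ hyt).comp_const_add y t)
  rwa [sub_mulVec_dotProduct_of_rank_one Ω₀ hw hxt.ne' hyt.ne', ← hankelSymbol_of_pos hxt,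
    ← hankelSymbol_of_pos hyt, add_sub_add_right_eq_sub] at h

/-- Factorization of the integrable kernel `⟨J v(x), v(y)⟩/(x−y)` arising
from the differential equation `v′(x) = J(xΩ₁ + Ω₀ + x⁻¹Ω₋₁)v(x)` with `Ω₁ ⪰ 0`,
`−Ω₋₁ ⪰ 0` and `rank Ω₁ + rank Ω₋₁ = 1`, as the square `Γ_ψ²` of a scalar Hankel
operator. -/
theorem integrable_kernel_hankel_square
    (n : ℕ) (hn : 1 ≤ n)
    (Ω₁ Ω₀ Ωₘ : Matrix (Fin n ⊕ Fin n) (Fin n ⊕ Fin n) ℝ)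
    (hΩ₁symm : Ω₁.IsSymm) (hΩ₀symm : Ω₀.IsSymm) (hΩₘsymm : Ωₘ.IsSymm)
    (hΩ₁pos : Ω₁.PosSemidef) (hΩₘneg : (-Ωₘ).PosSemidef)
    (hrank : Ω₁.rank + Ωₘ.rank = 1)
    (J : Matrix (Fin n ⊕ Fin n) (Fin n ⊕ Fin n) ℝ)
    (hJ : J = Matrix.fromBlocks 0 (-1) 1 0)
    (v : ℝ → EuclideanSpace ℝ (Fin n ⊕ Fin n))
    (hode : ∀ x : ℝ, 0 < x →
      HasDerivAt v (WithLp.toLp 2 (J.mulVec ((x • Ω₁ + Ω₀ + x⁻¹ • Ωₘ).mulVec (v x)))) x)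
    (hbdd : ∃ C : ℝ, ∀ x : ℝ, 0 < x → ‖v x‖ ≤ C)
    (hL2 : IntegrableOn (fun x => ‖v x‖ ^ 2) (Ioi (0 : ℝ)))
    (hL2' : IntegrableOn (fun x => ‖(x : ℝ)⁻¹ • v x‖ ^ 2) (Ioi (0 : ℝ)))
    (hdecay : Tendsto (fun x => ‖v x‖) atTop (nhds 0)) :
    ∃ ψ : ℝ → ℝ, Measurable ψ ∧ IntegrableOn (fun x => ψ x ^ 2) (Ioi (0 : ℝ)) ∧
      ∀ x y : ℝ, 0 < x → 0 < y → x ≠ y →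
        (J.mulVec (v x)) ⬝ᵥ (v y) / (x - y) =
          ∫ t in Ioi (0 : ℝ), ψ (x + t) * ψ (y + t) :=
  integrable_kernel_hankel_square_general n Ω₁ Ω₀ Ωₘ hΩ₀symm hΩ₁pos hΩₘneg hrank J hJ v hode hL2
    hL2' hdecay
end

section
/- Let n be a nonnegative integer and define u : (0,∞) → ℝ by u(x) = x e^{−x/2} L_n^{(1)}(x), where L_n^{(1)}(x) = (x^{−1} e^{x}/n!) · dⁿ/dxⁿ ( x^{n+1} e^{−x} ). Then for all x, y > 0 with x ≠ y: ( u(x) u′(y) − u′(x) u(y) )/(x−y) = (n+1) ∫_0^∞ u(x+t) u(y+t) / ( (x+t)(y+t) ) dt. -/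
open Real MeasureTheory Set

open Polynomial Filter Topology

/-! With `P = e^t (d/dt)^n (t^{n+1} e^{-t})`, a polynomial equal to `n! · x L_n^{(1)}(x)`,
`u = e^{-s/2} P(s) / n!` on `(0, ∞)`. The Rodrigues recursion `P_{m+1} = P_m' - P_m` yields
`x P'' = x P' - (n+1) P`, i.e. `u'' = (1/4 - (n+1)/s) u`, and `u`, `u'` decay at infinity.
For any such solution the shifted Wronskian `W(t) = u(x+t) u'(y+t) - u'(x+t) u(y+t)` has
derivative `(n+1) (y-x) u(x+t) u(y+t) / ((x+t)(y+t))`, the constant `1/4` cancelling; since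
`W → 0`, integrating over `(0, ∞)` gives the identity. -/

noncomputable def rodriguesPoly (n : ℕ) : ℕ → ℝ[X]
  | 0 => X ^ (n + 1)
  | m + 1 => derivative (rodriguesPoly n m) - rodriguesPoly n m

theorem iteratedDeriv_pow_mul_exp_neg (n m : ℕ) :
    iteratedDeriv m (fun t : ℝ => t ^ (n + 1) * exp (-t)) =
      fun t => (rodriguesPoly n m).eval t * exp (-t) := by
  induction m with
  | zero => simp [rodriguesPoly]
  | succ m ih =>
    ext t
    rw [iteratedDeriv_succ, ih]
    refine (((rodriguesPoly n m).hasDerivAt t).mul (hasDerivAt_neg t).exp).deriv.trans ?_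
    simp only [rodriguesPoly, eval_sub]
    ring

theorem derivative_rodriguesPoly (n m : ℕ) :
    derivative (rodriguesPoly n m) = rodriguesPoly n (m + 1) + rodriguesPoly n m :=
  (sub_add_cancel _ _).symm

theorem X_mul_derivative_derivative_sub_self {p q : ℝ[X]} {a b : ℝ}
    (hq : derivative q = p + q) (h : X * derivative p = C a * p - C b * q) :
    X * derivative (derivative p - p) = C (a - 1) * (derivative p - p) - C (b + 1) * p := by
  have h' := congrArg derivative h
  simp only [derivative_mul, derivative_X, derivative_C, derivative_sub, hq, one_mul, zero_mul,
    zero_add] at h'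
  simp only [map_sub, map_add, map_one]
  linear_combination h' - h

theorem X_mul_derivative_rodriguesPoly_succ (n m : ℕ) :
    X * derivative (rodriguesPoly n (m + 1)) =
      C ((n : ℝ) - m) * rodriguesPoly n (m + 1) - C ((m : ℝ) + 1) * rodriguesPoly n m := by
  induction m with
  | zero =>
    cases n with
    | zero => simp [rodriguesPoly]
    | succ k =>
      simp only [rodriguesPoly, derivative_sub, derivative_X_pow, derivative_C_mul,
        add_tsub_cancel_right]
      simp only [Nat.cast_add, Nat.cast_one, map_add, map_sub, map_natCast, map_one]
      ring
  | succ m ih =>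
    refine (X_mul_derivative_derivative_sub_self (derivative_rodriguesPoly n m) ih).trans ?_
    rw [show (n : ℝ) - m - 1 = n - ↑(m + 1) by push_cast; ring,
      show (m : ℝ) + 1 + 1 = ↑(m + 1) + 1 by push_cast; ring]
    rfl

theorem X_mul_derivative_derivative_rodriguesPoly (n : ℕ) :
    X * derivative (derivative (rodriguesPoly n n)) =
      X * derivative (rodriguesPoly n n) - C ((n : ℝ) + 1) * rodriguesPoly n n := by
  cases n with
  | zero => simp [rodriguesPoly]
  | succ m =>
    have h := X_mul_derivative_derivative_sub_self (derivative_rodriguesPoly (m + 1) m)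
      (X_mul_derivative_rodriguesPoly_succ (m + 1) m)
    rw [show ((m + 1 : ℕ) : ℝ) - m - 1 = 0 by push_cast; ring, map_zero, zero_mul, zero_sub]
      at h
    simp only [derivative_sub, Nat.cast_add, Nat.cast_one, map_add, map_natCast, map_one] at h ⊢
    linear_combination h

noncomputable def expNegHalfMul (p : ℝ[X]) (s : ℝ) : ℝ := exp (-s / 2) * p.eval s

noncomputable def twistedDerivative (p : ℝ[X]) : ℝ[X] := derivative p - C 2⁻¹ * p

theorem hasDerivAt_expNegHalfMul (p : ℝ[X]) (s : ℝ) :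
    HasDerivAt (expNegHalfMul p) (expNegHalfMul (twistedDerivative p) s) s := by
  have hexp : HasDerivAt (fun s : ℝ => exp (-s / 2)) (exp (-s / 2) * (-1 / 2)) s :=
    ((hasDerivAt_neg s).div_const 2).exp
  refine (hexp.mul (p.hasDerivAt s)).congr_deriv ?_
  simp only [expNegHalfMul, twistedDerivative, eval_sub, eval_mul, eval_C]
  ring

theorem tendsto_expNegHalfMul_atTop (p : ℝ[X]) : Tendsto (expNegHalfMul p) atTop (𝓝 0) := by
  have h := (tendsto_div_exp_atTop (p.comp (C 2 * X))).comp
    (tendsto_id.atTop_div_const (two_pos : (0 : ℝ) < 2))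
  refine h.congr fun s => ?_
  simp only [Function.comp_apply, id, eval_comp, eval_mul, eval_C, eval_X, expNegHalfMul,
    neg_div, exp_neg]
  rw [mul_div_cancel₀ s two_ne_zero, div_eq_inv_mul]

theorem expNegHalfMul_twistedDerivative_twistedDerivative {p : ℝ[X]} {k : ℝ}
    (hp : X * derivative (derivative p) = X * derivative p - C k * p) {s : ℝ} (hs : s ≠ 0) :
    expNegHalfMul (twistedDerivative (twistedDerivative p)) s =
      (4⁻¹ - k / s) * expNegHalfMul p s := by
  have hps := congrArg (eval s) hp
  simp only [eval_mul, eval_X, eval_sub, eval_C] at hps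
  simp only [expNegHalfMul, twistedDerivative, derivative_sub, derivative_C_mul, eval_sub,
    eval_mul, eval_C]
  field_simp
  linear_combination 16 * hps

section WronskianIdentity

variable {v v' : ℝ → ℝ} {a c x y : ℝ}

theorem integrableOn_Ioi_mul_div_mul (hv : ContinuousOn v (Ioi 0))
    (hv_lim : Tendsto v atTop (𝓝 0)) (hx : 0 < x) (hy : 0 < y) :
    IntegrableOn (fun t => v (x + t) * v (y + t) / ((x + t) * (y + t))) (Ioi 0) := by
  have hshift : ∀ z, 0 < z → ContinuousOn (fun t => v (z + t)) (Ici 0) := fun z hz =>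
    hv.comp (continuousOn_const.add continuousOn_id) fun t ht => by
      simp only [mem_Ioi]; linarith [mem_Ici.1 ht]
  have hcont : ContinuousOn (fun t => v (x + t) * v (y + t) / ((x + t) * (y + t))) (Ici 0) :=
    ((hshift x hx).mul (hshift y hy)).div (by fun_prop) fun t ht => by
      have := mem_Ici.1 ht; positivity
  have hshift_lim : ∀ z, Tendsto (fun t => v (z + t)) atTop (𝓝 0) := fun z =>
    hv_lim.comp (tendsto_atTop_add_const_left atTop z tendsto_id)
  have hO : (fun t => v (x + t) * v (y + t) / ((x + t) * (y + t))) =O[atTop]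
      fun t : ℝ => t ^ (-2 : ℝ) := by
    refine Asymptotics.IsBigO.of_bound 1 ?_
    filter_upwards [(hshift_lim x).eventually (Metric.closedBall_mem_nhds 0 one_pos),
      (hshift_lim y).eventually (Metric.closedBall_mem_nhds 0 one_pos), eventually_gt_atTop 0]
      with t htx hty ht
    rw [dist_zero_right] at htx hty
    rw [rpow_neg ht.le, rpow_two, norm_div, one_mul, norm_inv, norm_pow, norm_mul, norm_mul,
      Real.norm_of_nonneg (by positivity : 0 ≤ x + t),
      Real.norm_of_nonneg (by positivity : 0 ≤ y + t), Real.norm_of_nonneg ht.le]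
    calc ‖v (x + t)‖ * ‖v (y + t)‖ / ((x + t) * (y + t)) ≤ 1 / ((x + t) * (y + t)) := by
          gcongr; exact mul_le_one₀ htx (norm_nonneg _) hty
      _ ≤ (t ^ 2)⁻¹ := by
          rw [one_div, sq]; gcongr <;> linarith
  exact ((hcont.locallyIntegrableOn measurableSet_Ici).integrableOn_of_isBigO_atTop hO
    (integrableAtFilter_rpow_atTop_iff.2 (by norm_num))).mono_set Ioi_subset_Ici_self

theorem hasDerivAt_wronskian_shift
    (hv : ∀ s, 0 < s → HasDerivAt v (v' s) s)
    (hv' : ∀ s, 0 < s → HasDerivAt v' ((a - c / s) * v s) s) {t : ℝ}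
    (hxt : 0 < x + t) (hyt : 0 < y + t) :
    HasDerivAt (fun t => v (x + t) * v' (y + t) - v' (x + t) * v (y + t))
      (c * (y - x) * (v (x + t) * v (y + t) / ((x + t) * (y + t)))) t := by
  have hvx := (hv _ hxt).comp_const_add x t
  have hvy := (hv _ hyt).comp_const_add y t
  have hv'x := (hv' _ hxt).comp_const_add x t
  have hv'y := (hv' _ hyt).comp_const_add y t
  refine ((hvx.mul hv'y).sub (hv'x.mul hvy)).congr_deriv ?_
  field_simp
  ring

theorem wronskian_div_sub_eq_mul_integral
    (hv : ∀ s, 0 < s → HasDerivAt v (v' s) s)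
    (hv' : ∀ s, 0 < s → HasDerivAt v' ((a - c / s) * v s) s)
    (hv_lim : Tendsto v atTop (𝓝 0)) (hv'_lim : Tendsto v' atTop (𝓝 0))
    (hx : 0 < x) (hy : 0 < y) (hxy : x ≠ y) :
    (v x * v' y - v' x * v y) / (x - y) =
      c * ∫ t in Ioi 0, v (x + t) * v (y + t) / ((x + t) * (y + t)) := by
  have hW : ∀ t ∈ Ici (0 : ℝ), HasDerivAt
      (fun t => v (x + t) * v' (y + t) - v' (x + t) * v (y + t))
      (c * (y - x) * (v (x + t) * v (y + t) / ((x + t) * (y + t)))) t := fun t ht =>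
    hasDerivAt_wronskian_shift hv hv' (by linarith [mem_Ici.1 ht]) (by linarith [mem_Ici.1 ht])
  have hshift : ∀ {f : ℝ → ℝ} (z : ℝ), Tendsto f atTop (𝓝 0) →
      Tendsto (fun t => f (z + t)) atTop (𝓝 0) := fun z hf =>
    hf.comp (tendsto_atTop_add_const_left atTop z tendsto_id)
  have hW_lim :
      Tendsto (fun t => v (x + t) * v' (y + t) - v' (x + t) * v (y + t)) atTop (𝓝 0) := by
    simpa using ((hshift x hv_lim).mul (hshift y hv'_lim)).sub
      ((hshift x hv'_lim).mul (hshift y hv_lim))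
  have hint := (integrableOn_Ioi_mul_div_mul
    (fun s hs => (hv s hs).continuousAt.continuousWithinAt) hv_lim hx hy).const_mul (c * (y - x))
  have hFTC := integral_Ioi_of_hasDerivAt_of_tendsto' hW hint hW_lim
  simp only [integral_const_mul, add_zero, zero_sub] at hFTC
  rw [div_eq_iff (sub_ne_zero.2 hxy)]
  linear_combination hFTC

end WronskianIdentity

/-- For the Laguerre function `u(x) = x e^{−x/2} Lₙ⁽¹⁾(x)`, the integrable
kernel `(u(x)u′(y) − u′(x)u(y))/(x−y)` equals
`(n+1) ∫₀^∞ u(x+t)u(y+t)/((x+t)(y+t)) dt`. -/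
theorem laguerre_kernel_hankel_square
    (n : ℕ) (L u : ℝ → ℝ)
    (hL : ∀ x : ℝ, 0 < x →
      L x = x⁻¹ * Real.exp x / (n.factorial : ℝ) *
        iteratedDeriv n (fun t : ℝ => t ^ (n + 1) * Real.exp (-t)) x)
    (hu : ∀ x : ℝ, 0 < x → u x = x * Real.exp (-x / 2) * L x) :
    ∀ x y : ℝ, 0 < x → 0 < y → x ≠ y →
      (u x * deriv u y - deriv u x * u y) / (x - y) =
        (n + 1) * ∫ t in Ioi (0 : ℝ), u (x + t) * u (y + t) / ((x + t) * (y + t)) := by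
  intro x y hx hy hxy
  set p : ℝ[X] := C (n.factorial : ℝ)⁻¹ * rodriguesPoly n n
  have hp : X * derivative (derivative p) = X * derivative p - C ((n : ℝ) + 1) * p := by
    simp only [p, derivative_C_mul]
    linear_combination C (n.factorial : ℝ)⁻¹ * X_mul_derivative_derivative_rodriguesPoly n
  have hup : EqOn u (expNegHalfMul p) (Ioi 0) := fun s hs => by
    rw [hu s hs, hL s hs, iteratedDeriv_pow_mul_exp_neg]
    simp only [expNegHalfMul, p, eval_mul, eval_C, exp_neg]
    field_simp [(mem_Ioi.1 hs).ne']
  have hu' : ∀ s, 0 < s → HasDerivAt u (expNegHalfMul (twistedDerivative p) s) s := fun s hs =>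
    (hasDerivAt_expNegHalfMul p s).congr_of_eventuallyEq (eventually_of_mem (Ioi_mem_nhds hs) hup)
  rw [(hu' x hx).deriv, (hu' y hy).deriv]
  refine wronskian_div_sub_eq_mul_integral (a := 4⁻¹) hu' (fun s hs => ?_)
    ((tendsto_expNegHalfMul_atTop p).congr' (eventually_of_mem (Ioi_mem_atTop 0) hup.symm))
    (tendsto_expNegHalfMul_atTop _) hx hy hxy
  rw [hup hs, ← expNegHalfMul_twistedDerivative_twistedDerivative hp hs.ne']
  exact hasDerivAt_expNegHalfMul _ s
end

section
/- Let n be a nonnegative integer and define u : (0,∞) → ℝ by u(x) = x e^{−x/2} L_n^{(1)}(x), where L_n^{(1)}(x) = (x^{−1} e^{x}/n!) · dⁿ/dxⁿ ( x^{n+1} e^{−x} ). Then for every complex number λ with Re λ > −1/2, the Laplace transform of u satisfies ∫_0^∞ e^{−λ x} u(x) dx = (n+1) (λ − 1/2)^n / (λ + 1/2)^{n+2}. -/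
/-!
Write `dᵏ/dxᵏ (x^{n+1} e^{-x}) = q_k(x) e^{-x}`, where `q_0 = X^{n+1}` and
`q_{k+1} = q_k' - q_k`; since `X^{n+1-k} ∣ q_k`, these functions vanish at `0` for `k ≤ n`.
For such a function `f`, integration by parts gives
`∫₀^∞ e^{-μx} f'(x) dx = μ ∫₀^∞ e^{-μx} f(x) dx` whenever `Re μ > -1`.
The factor `x e^{-x/2} · x⁻¹ eˣ` in `u` turns the kernel `e^{-λx}` into `e^{-μx}` with
`μ = λ - 1/2`, so the transform is `μⁿ / n!` times
`∫₀^∞ x^{n+1} e^{-(λ+1/2)x} dx = (n+1)! / (λ+1/2)^{n+2}`.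
-/

open Real MeasureTheory Set Complex Filter Topology Polynomial

section PolynomialTimesExp

variable {s : ℂ}

theorem tendsto_cexp_neg_mul_mul_pow_atTop (hs : 0 < s.re) (k : ℕ) :
    Tendsto (fun x : ℝ => cexp (-s * x) * ((x ^ k : ℝ) : ℂ)) atTop (𝓝 0) := by
  rw [tendsto_zero_iff_norm_tendsto_zero]
  refine (tendsto_rpow_mul_exp_neg_mul_atTop_nhds_zero k s.re hs).congr' ?_
  filter_upwards [eventually_gt_atTop 0] with x hx
  simp [Complex.norm_exp, abs_of_pos hx, mul_comm]

theorem integrableOn_cexp_neg_mul_mul_pow_Ioi (hs : 0 < s.re) (k : ℕ) :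
    IntegrableOn (fun x : ℝ => cexp (-s * x) * ((x ^ k : ℝ) : ℂ)) (Ioi 0) := by
  refine (integrableOn_rpow_mul_exp_neg_mul_rpow (s := k) (by linarith [k.cast_nonneg (α := ℝ)])
    one_pos hs).mono' (by fun_prop) ?_
  filter_upwards [ae_restrict_mem measurableSet_Ioi] with x (hx : 0 < x)
  simp [Complex.norm_exp, abs_of_pos hx, mul_comm]

theorem tendsto_cexp_neg_mul_mul_eval_atTop (hs : 0 < s.re) (p : ℝ[X]) :
    Tendsto (fun x : ℝ => cexp (-s * x) * ((p.eval x : ℝ) : ℂ)) atTop (𝓝 0) := by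
  induction p using Polynomial.induction_on' with
  | add p q hp hq => simpa [mul_add] using hp.add hq
  | monomial k a =>
    simpa [mul_left_comm] using (tendsto_cexp_neg_mul_mul_pow_atTop hs k).const_mul (a : ℂ)

theorem integrableOn_cexp_neg_mul_mul_eval_Ioi (hs : 0 < s.re) (p : ℝ[X]) :
    IntegrableOn (fun x : ℝ => cexp (-s * x) * ((p.eval x : ℝ) : ℂ)) (Ioi 0) := by
  induction p using Polynomial.induction_on' with
  | add p q hp hq => exact (hp.add hq).congr (.of_forall fun x => by simp [mul_add])
  | monomial k a =>
    refine ((integrableOn_cexp_neg_mul_mul_pow_Ioi hs k).const_mul (a : ℂ)).congr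
      (.of_forall fun x => ?_)
    simp [mul_left_comm]

end PolynomialTimesExp

theorem integral_cexp_neg_mul_mul_deriv_Ioi {g g' : ℝ → ℂ} {s : ℂ}
    (hg0 : ContinuousWithinAt g (Ioi 0) 0) (hg : ∀ x ∈ Ioi (0 : ℝ), HasDerivAt g (g' x) x)
    (hg'_int : IntegrableOn (fun x : ℝ => cexp (-s * x) * g' x) (Ioi 0))
    (hg_int : IntegrableOn (fun x : ℝ => cexp (-s * x) * g x) (Ioi 0))
    (hg_top : Tendsto (fun x : ℝ => cexp (-s * x) * g x) atTop (𝓝 0)) :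
    ∫ x in Ioi (0 : ℝ), cexp (-s * x) * g' x =
      s * (∫ x in Ioi (0 : ℝ), cexp (-s * x) * g x) - g 0 := by
  have hexp (x : ℝ) : HasDerivAt (fun x : ℝ => cexp (-s * x)) (-s * cexp (-s * x)) x := by
    simpa [mul_comm] using ((Complex.ofRealCLM.hasDerivAt (x := x)).const_mul (-s)).cexp
  have hzero : Tendsto (fun x : ℝ => cexp (-s * x) * g x) (𝓝[>] 0) (𝓝 (g 0)) := by
    simpa using ((hexp 0).continuousAt.tendsto.mono_left nhdsWithin_le_nhds).mul hg0
  rw [integral_Ioi_mul_deriv_eq_deriv_mul (fun x _ => hexp x) hg hg'_int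
    ((hg_int.const_mul (-s)).congr (.of_forall fun x => by simp only [Pi.mul_apply]; ring))
    hzero hg_top]
  simp only [mul_assoc]
  rw [integral_const_mul]
  ring

theorem integral_cexp_neg_mul_mul_pow_Ioi {s : ℂ} (hs : 0 < s.re) (k : ℕ) :
    ∫ x in Ioi (0 : ℝ), cexp (-s * x) * ((x ^ k : ℝ) : ℂ) = k.factorial / s ^ (k + 1) := by
  have hs0 : s ≠ 0 := ne_zero_of_re_pos hs
  rw [eq_div_iff (pow_ne_zero _ hs0)]
  induction k with
  | zero =>
    have h := integral_cexp_neg_mul_mul_deriv_Ioi (g := fun _ => 1) (g' := fun _ => 0) (s := s)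
      continuousWithinAt_const (fun x _ => hasDerivAt_const x 1) (by simp)
      (by simpa using integrableOn_cexp_neg_mul_mul_pow_Ioi hs 0)
      (by simpa using tendsto_cexp_neg_mul_mul_pow_atTop hs 0)
    simp only [mul_zero, integral_zero, mul_one] at h
    simp only [pow_zero, ofReal_one, mul_one, zero_add, pow_one, Nat.factorial_zero, Nat.cast_one]
    linear_combination -h
  | succ k ih =>
    have h := integral_cexp_neg_mul_mul_deriv_Ioi
      (g := fun x : ℝ => ((x ^ (k + 1) : ℝ) : ℂ))
      (g' := fun x : ℝ => (k + 1) * ((x ^ k : ℝ) : ℂ))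
      (s := s) (by fun_prop)
      (fun x _ => by simpa using ((hasDerivAt_pow (k + 1) x).ofReal_comp))
      (((integrableOn_cexp_neg_mul_mul_pow_Ioi hs k).const_mul ((k : ℂ) + 1)).congr
        (.of_forall fun x => mul_left_comm _ _ _))
      (integrableOn_cexp_neg_mul_mul_pow_Ioi hs (k + 1))
      (tendsto_cexp_neg_mul_mul_pow_atTop hs (k + 1))
    simp only [mul_left_comm _ ((k : ℂ) + 1), integral_const_mul, ofReal_zero,
      zero_pow (Nat.succ_ne_zero k), sub_zero] at h
    rw [Nat.factorial_succ, Nat.cast_mul, Nat.cast_succ]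
    linear_combination s ^ (k + 1) * (-h) + (k + 1) * ih

section DerivSubSelf

variable {R : Type*} [CommRing R]

noncomputable def derivSubSelf (p : R[X]) : R[X] := derivative p - p

theorem pow_sub_one_dvd_derivSubSelf_of_pow_dvd {p q : R[X]} {j : ℕ} (h : p ^ j ∣ q) :
    p ^ (j - 1) ∣ derivSubSelf q :=
  dvd_sub (pow_sub_one_dvd_derivative_of_pow_dvd h) ((pow_dvd_pow p (j.sub_le 1)).trans h)

theorem pow_sub_dvd_iterate_derivSubSelf_of_pow_dvd {p q : R[X]} {j : ℕ} (k : ℕ)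
    (h : p ^ j ∣ q) : p ^ (j - k) ∣ derivSubSelf^[k] q := by
  induction k with
  | zero => simpa using h
  | succ k ih =>
    rw [Function.iterate_succ_apply', Nat.sub_succ']
    exact pow_sub_one_dvd_derivSubSelf_of_pow_dvd ih

theorem eval_zero_iterate_derivSubSelf_X_pow {m k : ℕ} (hk : k < m) :
    (derivSubSelf^[k] (X ^ m : R[X])).eval 0 = 0 := by
  obtain ⟨r, hr⟩ := (dvd_pow_self X (Nat.sub_ne_zero_of_lt hk)).trans
    (pow_sub_dvd_iterate_derivSubSelf_of_pow_dvd (q := (X ^ m : R[X])) k dvd_rfl)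
  simp [hr]

end DerivSubSelf

theorem hasDerivAt_eval_mul_exp_neg (p : ℝ[X]) (x : ℝ) :
    HasDerivAt (fun t => p.eval t * rexp (-t)) ((derivSubSelf p).eval x * rexp (-x)) x := by
  rw [derivSubSelf, eval_sub]
  exact ((p.hasDerivAt x).mul (hasDerivAt_neg x).exp).congr_deriv (by ring)

theorem iteratedDeriv_eval_mul_exp_neg (p : ℝ[X]) (k : ℕ) :
    iteratedDeriv k (fun t => p.eval t * rexp (-t)) =
      fun t => (derivSubSelf^[k] p).eval t * rexp (-t) := by
  induction k with
  | zero => simp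
  | succ k ih =>
    rw [iteratedDeriv_succ, ih, Function.iterate_succ_apply']
    exact funext fun x => (hasDerivAt_eval_mul_exp_neg _ x).deriv

theorem cexp_neg_mul_mul_ofReal_mul_exp_neg (μ : ℂ) (x r : ℝ) :
    cexp (-μ * x) * ((r * rexp (-x) : ℝ) : ℂ) = cexp (-(μ + 1) * x) * (r : ℂ) := by
  rw [ofReal_mul, ofReal_exp, mul_left_comm, ← Complex.exp_add, ofReal_neg]
  ring_nf

theorem integral_cexp_neg_mul_mul_derivSubSelf_Ioi {μ : ℂ} (hμ : 0 < (μ + 1).re) {p : ℝ[X]}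
    (hp : p.eval 0 = 0) :
    ∫ x in Ioi (0 : ℝ), cexp (-μ * x) * (((derivSubSelf p).eval x * rexp (-x) : ℝ) : ℂ) =
      μ * ∫ x in Ioi (0 : ℝ), cexp (-μ * x) * ((p.eval x * rexp (-x) : ℝ) : ℂ) := by
  have h := integral_cexp_neg_mul_mul_deriv_Ioi (s := μ)
    (g := fun x : ℝ => ((p.eval x * rexp (-x) : ℝ) : ℂ))
    (g' := fun x : ℝ => (((derivSubSelf p).eval x * rexp (-x) : ℝ) : ℂ))
    (by fun_prop) (fun x _ => (hasDerivAt_eval_mul_exp_neg p x).ofReal_comp)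
    (by simpa only [cexp_neg_mul_mul_ofReal_mul_exp_neg]
      using integrableOn_cexp_neg_mul_mul_eval_Ioi hμ (derivSubSelf p))
    (by simpa only [cexp_neg_mul_mul_ofReal_mul_exp_neg]
      using integrableOn_cexp_neg_mul_mul_eval_Ioi hμ p)
    (by simpa only [cexp_neg_mul_mul_ofReal_mul_exp_neg]
      using tendsto_cexp_neg_mul_mul_eval_atTop hμ p)
  simpa only [hp, zero_mul, ofReal_zero, sub_zero] using h

theorem integral_cexp_neg_mul_mul_iteratedDeriv_pow_mul_exp_neg_Ioi {μ : ℂ}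
    (hμ : 0 < (μ + 1).re) {m k : ℕ} (hk : k ≤ m) :
    ∫ x in Ioi (0 : ℝ),
        cexp (-μ * x) * ((iteratedDeriv k (fun t : ℝ => t ^ m * rexp (-t)) x : ℝ) : ℂ) =
      μ ^ k * (m.factorial / (μ + 1) ^ (m + 1)) := by
  have hX : (fun t : ℝ => t ^ m * rexp (-t)) = fun t => (X ^ m : ℝ[X]).eval t * rexp (-t) := by
    simp
  rw [hX, iteratedDeriv_eval_mul_exp_neg]
  induction k with
  | zero =>
    simpa only [Function.iterate_zero_apply, eval_pow, eval_X, cexp_neg_mul_mul_ofReal_mul_exp_neg,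
      pow_zero, one_mul] using integral_cexp_neg_mul_mul_pow_Ioi hμ m
  | succ k ih =>
    rw [Function.iterate_succ_apply', integral_cexp_neg_mul_mul_derivSubSelf_Ioi hμ
      (eval_zero_iterate_derivSubSelf_X_pow hk), ih (by omega), pow_succ]
    ring

/-- The Laplace transform of the Laguerre function
`u(x) = x e^{−x/2} Lₙ⁽¹⁾(x)` is `(n+1)(λ−1/2)ⁿ/(λ+1/2)^{n+2}` for `Re λ > −1/2`. -/
theorem laguerre_laplace_transform
    (n : ℕ) (L u : ℝ → ℝ)
    (hL : ∀ x : ℝ, 0 < x →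
      L x = x⁻¹ * Real.exp x / (n.factorial : ℝ) *
        iteratedDeriv n (fun t : ℝ => t ^ (n + 1) * Real.exp (-t)) x)
    (hu : ∀ x : ℝ, 0 < x → u x = x * Real.exp (-x / 2) * L x) :
    ∀ lam : ℂ, -(1 / 2) < lam.re →
      ∫ x in Ioi (0 : ℝ), Complex.exp (-lam * x) * (u x : ℂ) =
        (n + 1) * (lam - 1 / 2) ^ n / (lam + 1 / 2) ^ (n + 2) := by
  intro lam hlam
  set D := iteratedDeriv n (fun t : ℝ => t ^ (n + 1) * Real.exp (-t))
  have hμ : 0 < (lam - 1 / 2 + 1).re := by norm_num; linarith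
  have hintegrand : ∀ x ∈ Ioi (0 : ℝ), cexp (-lam * x) * (u x : ℂ) =
      (n.factorial : ℂ)⁻¹ * (cexp (-(lam - 1 / 2) * x) * (D x : ℂ)) := by
    intro x (hx : 0 < x)
    have hexp :
        cexp (-lam * x) * ((rexp (-x / 2) * rexp x : ℝ) : ℂ) = cexp (-(lam - 1 / 2) * x) := by
      push_cast
      rw [← Complex.exp_add, ← Complex.exp_add]
      congr 1
      ring
    have hx0 : (x : ℂ) ≠ 0 := ofReal_ne_zero.mpr hx.ne'
    rw [hu x hx, hL x hx, ← hexp]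
    push_cast
    field_simp
  rw [setIntegral_congr_fun measurableSet_Ioi hintegrand, integral_const_mul,
    integral_cexp_neg_mul_mul_iteratedDeriv_pow_mul_exp_neg_Ioi hμ n.le_succ,
    Nat.factorial_succ]
  have hn : (n.factorial : ℂ) ≠ 0 := by exact_mod_cast n.factorial_ne_zero
  have hne : lam - 1 / 2 + 1 ≠ 0 := ne_zero_of_re_pos hμ
  rw [show lam - 1 / 2 + 1 = lam + 1 / 2 by ring] at hne ⊢
  push_cast
  field_simp
end

section
/- Define u : (0,∞) → ℝ by the convergent power series u(x) = Σ_{k=0}^∞ (−1)^k x^{k+1} / ( k! (k+1)! ), so that u(x) = √x · J_1(2√x) where J_1 is the Bessel function of the first kind of order one. Then for all x, y > 0 with x ≠ y: ( u(x) u′(y) − u′(x) u(y) )/(x−y) = ∫_0^∞ u(x+t) u(y+t) / ( (x+t)(y+t) ) dt. -/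
/-!
Put `W(a, b) = u a * u' b - u' a * u b`. Since `u'' = -u / x`, the derivative of
`t ↦ W(x + t, y + t)` is `(y - x) u(x+t) u(y+t) / ((x+t)(y+t))`, so the identity is the
fundamental theorem of calculus on `(0, ∞)`, provided the kernel is integrable and
`W(x + t, y + t) → 0`. Both follow from the bounds `u = O(x^{1/4})`, `u' = O(x^{-1/4})`, valid for
every solution of `u'' = -u / x`: with `q = x^{1/4}`, `A = u / q` and `B = q u' - u / (4 q³)`, the
energy `(A² + B²) exp (3 / (8 q²))` has derivative `-(3 / (16 q⁶)) (A - B)² exp (3 / (8 q²)) ≤ 0`.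
-/

open Real MeasureTheory Set Filter Topology
open scoped Nat

section PowerSeries

variable {𝕜 : Type*} [RCLike 𝕜]

theorem hasDerivAt_tsum_mul_pow_succ {a : ℕ → 𝕜} (ha : ∀ k, ‖a k‖ ≤ 1 / ((k + 1)! : ℝ))
    (x : 𝕜) :
    HasDerivAt (fun z => ∑' k, a k * z ^ (k + 1)) (∑' k, (k + 1) * a k * x ^ k) x := by
  set R := ‖x‖ + 1
  refine hasDerivAt_tsum_of_isPreconnected (g := fun k z => a k * z ^ (k + 1))
    (g' := fun k y => (k + 1) * a k * y ^ k) (Real.summable_pow_div_factorial R) Metric.isOpen_ball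
    (convex_ball (0 : 𝕜) R).isPreconnected (fun k y _ => ?_) (fun k y hy => ?_)
    (y₀ := 0) (Metric.mem_ball_self (by positivity)) (by simp)
    (mem_ball_zero_iff.mpr (lt_add_one _))
  · simpa [mul_assoc, mul_left_comm] using (hasDerivAt_pow (k + 1) y).const_mul (a k)
  · have hyR : ‖y‖ ≤ R := (mem_ball_zero_iff.mp hy).le
    calc ‖(k + 1) * a k * y ^ k‖ = (k + 1) * ‖a k‖ * ‖y‖ ^ k := by
          rw [norm_mul, norm_mul, norm_pow]; norm_cast
      _ ≤ (k + 1) * (1 / (k + 1)!) * R ^ k := by gcongr; exact ha k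
      _ = R ^ k / k ! := by rw [Nat.factorial_succ]; push_cast; field_simp

theorem hasDerivAt_tsum_mul_pow {a : ℕ → 𝕜} (ha : ∀ k, ‖a k‖ ≤ 1 / (k ! : ℝ)) (x : 𝕜) :
    HasDerivAt (fun z => ∑' k, a k * z ^ k) (∑' k, (k + 1) * a (k + 1) * x ^ k) x := by
  have hsum (z : 𝕜) : Summable fun k => a k * z ^ k := by
    refine .of_norm_bounded (Real.summable_pow_div_factorial ‖z‖) fun k => ?_
    rw [norm_mul, norm_pow, div_eq_mul_one_div, mul_comm]
    gcongr
    exact ha k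
  have hshift : (fun z => ∑' k, a k * z ^ k) = fun z => a 0 + ∑' k, a (k + 1) * z ^ (k + 1) := by
    ext z; simpa using (hsum z).tsum_eq_zero_add
  rw [hshift]
  exact (hasDerivAt_tsum_mul_pow_succ (fun k => ha (k + 1)) x).const_add _

end PowerSeries

section QuarterPower

lemma rpow_quarter_pow_four {x : ℝ} (hx : 0 ≤ x) : (x ^ (1 / 4 : ℝ)) ^ 4 = x := by
  rw [← rpow_mul_natCast hx]; norm_num

lemma hasDerivAt_rpow_quarter {x : ℝ} (hx : 0 < x) :
    HasDerivAt (fun x : ℝ => x ^ (1 / 4 : ℝ)) (1 / (4 * (x ^ (1 / 4 : ℝ)) ^ 3)) x := by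
  refine (hasDerivAt_rpow_const (p := 1 / 4) (Or.inl hx.ne')).congr_deriv ?_
  have hq : 0 < x ^ (1 / 4 : ℝ) := rpow_pos_of_pos hx _
  rw [rpow_sub_one hx.ne']
  set q := x ^ (1 / 4 : ℝ)
  rw [← rpow_quarter_pow_four hx.le]
  field_simp
  ring

end QuarterPower

namespace BesselKernel

variable {u v : ℝ → ℝ} {C : ℝ}

noncomputable def scaledU (u : ℝ → ℝ) (x : ℝ) : ℝ := u x / x ^ (1 / 4 : ℝ)

noncomputable def scaledV (u v : ℝ → ℝ) (x : ℝ) : ℝ :=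
  x ^ (1 / 4 : ℝ) * v x - u x / (4 * (x ^ (1 / 4 : ℝ)) ^ 3)

/-- The factor `exp (3 / (8 q²))` absorbs the non-oscillating term `3 A / (16 q⁶)` of `B'`. -/
noncomputable def lyapunov (u v : ℝ → ℝ) (x : ℝ) : ℝ :=
  (scaledU u x ^ 2 + scaledV u v x ^ 2) * exp (3 / (8 * (x ^ (1 / 4 : ℝ)) ^ 2))

lemma hasDerivAt_scaledU (hu : ∀ x, 0 < x → HasDerivAt u (v x) x) {x : ℝ} (hx : 0 < x) :
    HasDerivAt (scaledU u) (scaledV u v x / (x ^ (1 / 4 : ℝ)) ^ 2) x := by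
  have hq : 0 < x ^ (1 / 4 : ℝ) := rpow_pos_of_pos hx _
  refine ((hu x hx).div (hasDerivAt_rpow_quarter hx) hq.ne').congr_deriv ?_
  unfold scaledV
  ring

lemma hasDerivAt_scaledV (hu : ∀ x, 0 < x → HasDerivAt u (v x) x)
    (hv : ∀ x, 0 < x → HasDerivAt v (-u x / x) x) {x : ℝ} (hx : 0 < x) :
    HasDerivAt (scaledV u v) (-scaledU u x / (x ^ (1 / 4 : ℝ)) ^ 2
      + 3 * scaledU u x / (16 * (x ^ (1 / 4 : ℝ)) ^ 6)) x := by
  have hq : 0 < x ^ (1 / 4 : ℝ) := rpow_pos_of_pos hx _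
  have hq' := hasDerivAt_rpow_quarter hx
  refine ((hq'.mul (hv x hx)).sub ((hu x hx).div ((hq'.pow 3).const_mul 4)
    (mul_pos four_pos (pow_pos hq 3)).ne')).congr_deriv ?_
  simp only [scaledU, Pi.pow_apply]
  set q := x ^ (1 / 4 : ℝ)
  rw [← rpow_quarter_pow_four hx.le]
  field_simp
  ring

lemma hasDerivAt_lyapunov (hu : ∀ x, 0 < x → HasDerivAt u (v x) x)
    (hv : ∀ x, 0 < x → HasDerivAt v (-u x / x) x) {x : ℝ} (hx : 0 < x) :
    HasDerivAt (lyapunov u v) (-(3 / (16 * (x ^ (1 / 4 : ℝ)) ^ 6))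
      * (scaledU u x - scaledV u v x) ^ 2 * exp (3 / (8 * (x ^ (1 / 4 : ℝ)) ^ 2))) x := by
  have hq : 0 < x ^ (1 / 4 : ℝ) := rpow_pos_of_pos hx _
  have hexp := ((hasDerivAt_const x (3 : ℝ)).div
    (((hasDerivAt_rpow_quarter hx).pow 2).const_mul 8)
    (mul_pos (by norm_num) (pow_pos hq 2)).ne').exp
  refine ((((hasDerivAt_scaledU hu hx).pow 2).add ((hasDerivAt_scaledV hu hv hx).pow 2)).mul
    hexp).congr_deriv ?_
  simp only [Pi.pow_apply, Pi.div_apply, Pi.add_apply]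
  set q := x ^ (1 / 4 : ℝ)
  field_simp
  ring

lemma lyapunov_antitoneOn (hu : ∀ x, 0 < x → HasDerivAt u (v x) x)
    (hv : ∀ x, 0 < x → HasDerivAt v (-u x / x) x) : AntitoneOn (lyapunov u v) (Ioi 0) := by
  refine antitoneOn_of_hasDerivWithinAt_nonpos (convex_Ioi 0)
    (fun x hx => (hasDerivAt_lyapunov hu hv hx).continuousAt.continuousWithinAt)
    (fun x hx => (hasDerivAt_lyapunov hu hv (interior_subset hx)).hasDerivWithinAt) fun x hx => ?_
  have hq : 0 < x ^ (1 / 4 : ℝ) := rpow_pos_of_pos (interior_subset hx : 0 < x) _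
  rw [neg_mul, neg_mul]
  exact neg_nonpos.2 (by positivity)

theorem exists_abs_le_rpow_quarter (hu : ∀ x, 0 < x → HasDerivAt u (v x) x)
    (hv : ∀ x, 0 < x → HasDerivAt v (-u x / x) x) :
    ∃ C, 0 ≤ C ∧ (∀ z, 1 ≤ z → |u z| ≤ C * z ^ (1 / 4 : ℝ)) ∧
      ∀ z, 1 ≤ z → |v z| ≤ C / z ^ (1 / 4 : ℝ) := by
  set c := √(lyapunov u v 1)
  have hc : 0 ≤ c := sqrt_nonneg _
  suffices h : ∀ z, 1 ≤ z → |u z| ≤ 2 * c * z ^ (1 / 4 : ℝ) ∧ |v z| ≤ 2 * c / z ^ (1 / 4 : ℝ) from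
    ⟨2 * c, by positivity, fun z hz => (h z hz).1, fun z hz => (h z hz).2⟩
  intro z hz
  have hz0 : 0 < z := one_pos.trans_le hz
  obtain ⟨q, hq_def⟩ : ∃ q, q = z ^ (1 / 4 : ℝ) := ⟨_, rfl⟩
  have hq : 1 ≤ q := hq_def ▸ one_le_rpow hz (by norm_num)
  have henergy : scaledU u z ^ 2 + scaledV u v z ^ 2 ≤ lyapunov u v 1 := calc
    _ ≤ lyapunov u v z := le_mul_of_one_le_right (by positivity) (one_le_exp (by positivity))
    _ ≤ lyapunov u v 1 := lyapunov_antitoneOn hu hv (mem_Ioi.2 one_pos) hz0 hz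
  have hA : |scaledU u z| ≤ c := abs_le_sqrt (by nlinarith [sq_nonneg (scaledV u v z)])
  have hB : |scaledV u v z| ≤ c := abs_le_sqrt (by nlinarith [sq_nonneg (scaledU u z)])
  have hu_eq : u z = q * scaledU u z := by
    rw [scaledU, ← hq_def]; field_simp
  have hv_eq : v z = (scaledV u v z + scaledU u z / (4 * q ^ 2)) / q := by
    rw [scaledU, scaledV, ← hq_def]; field_simp; ring
  rw [← hq_def]
  constructor
  · rw [hu_eq, abs_mul, abs_of_pos (by positivity : 0 < q)]
    nlinarith
  · rw [hv_eq, abs_div, abs_of_pos (by positivity : 0 < q)]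
    gcongr
    calc |scaledV u v z + scaledU u z / (4 * q ^ 2)|
        ≤ |scaledV u v z| + |scaledU u z| / (4 * q ^ 2) := by
          refine (abs_add_le _ _).trans_eq ?_
          rw [abs_div, abs_of_pos (by positivity : 0 < 4 * q ^ 2)]
      _ ≤ c + c / 4 := by gcongr; nlinarith
      _ ≤ 2 * c := by linarith

lemma abs_div_self_le (hC0 : 0 ≤ C) (hCu : ∀ z, 1 ≤ z → |u z| ≤ C * z ^ (1 / 4 : ℝ))
    {w z : ℝ} (hw : 1 ≤ w) (hwz : w ≤ z) : |u z / z| ≤ C / (w ^ (1 / 4 : ℝ)) ^ 3 := by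
  have hz : 1 ≤ z := hw.trans hwz
  calc |u z / z| = |u z| / (z ^ (1 / 4 : ℝ)) ^ 4 := by
        rw [abs_div, abs_of_pos (by linarith : 0 < z), rpow_quarter_pow_four (by linarith)]
    _ ≤ C * z ^ (1 / 4 : ℝ) / (z ^ (1 / 4 : ℝ)) ^ 4 := by gcongr; exact hCu z hz
    _ = C / (z ^ (1 / 4 : ℝ)) ^ 3 := by field_simp
    _ ≤ C / (w ^ (1 / 4 : ℝ)) ^ 3 := by gcongr

lemma abs_wronskian_le (hu : ∀ x, 0 < x → HasDerivAt u (v x) x)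
    (hv : ∀ x, 0 < x → HasDerivAt v (-u x / x) x)
    (hC0 : 0 ≤ C) (hCu : ∀ z, 1 ≤ z → |u z| ≤ C * z ^ (1 / 4 : ℝ))
    (hCv : ∀ z, 1 ≤ z → |v z| ≤ C / z ^ (1 / 4 : ℝ))
    {a b : ℝ} (ha : 1 ≤ a) (hab : a ≤ b) :
    |u a * v b - v a * u b| ≤ 2 * C ^ 2 * (b - a) / (a ^ (1 / 4 : ℝ)) ^ 2 := by
  have hq : 0 < a ^ (1 / 4 : ℝ) := rpow_pos_of_pos (by linarith) _
  have hpos : ∀ z ∈ Ici a, 0 < z := fun z hz => by linarith [mem_Ici.1 hz]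
  have hv_diff : |v b - v a| ≤ C / (a ^ (1 / 4 : ℝ)) ^ 3 * |b - a| :=
    (convex_Ici a).norm_image_sub_le_of_norm_hasDerivWithin_le
      (fun z hz => (hv z (hpos z hz)).hasDerivWithinAt)
      (fun z hz => by rw [norm_eq_abs, neg_div, abs_neg]; exact abs_div_self_le hC0 hCu ha hz)
      self_mem_Ici hab
  have hu_diff : |u b - u a| ≤ C / a ^ (1 / 4 : ℝ) * |b - a| :=
    (convex_Ici a).norm_image_sub_le_of_norm_hasDerivWithin_le
      (fun z hz => (hu z (hpos z hz)).hasDerivWithinAt)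
      (fun z hz => (hCv z (ha.trans hz)).trans <|
        div_le_div_of_nonneg_left hC0 hq (rpow_le_rpow (by linarith) hz (by norm_num)))
      self_mem_Ici hab
  rw [abs_of_nonneg (sub_nonneg.2 hab)] at hv_diff hu_diff
  calc |u a * v b - v a * u b| = |u a * (v b - v a) - v a * (u b - u a)| := by ring_nf
    _ ≤ |u a| * |v b - v a| + |v a| * |u b - u a| := by
        rw [← abs_mul, ← abs_mul]; exact abs_sub _ _
    _ ≤ C * a ^ (1 / 4 : ℝ) * (C / (a ^ (1 / 4 : ℝ)) ^ 3 * (b - a))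
        + C / a ^ (1 / 4 : ℝ) * (C / a ^ (1 / 4 : ℝ) * (b - a)) := by
        gcongr
        · exact hCu a ha
        · exact hCv a ha
    _ = 2 * C ^ 2 * (b - a) / (a ^ (1 / 4 : ℝ)) ^ 2 := by field_simp; ring

lemma hasDerivAt_wronskian_add (hu : ∀ x, 0 < x → HasDerivAt u (v x) x)
    (hv : ∀ x, 0 < x → HasDerivAt v (-u x / x) x) {x y t : ℝ} (hxt : 0 < x + t) (hyt : 0 < y + t) :
    HasDerivAt (fun s => u (x + s) * v (y + s) - v (x + s) * u (y + s))
      ((y - x) * (u (x + t) * u (y + t) / ((x + t) * (y + t)))) t := by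
  have hux := (hu _ hxt).comp_const_add x t
  have huy := (hu _ hyt).comp_const_add y t
  have hvx := (hv _ hxt).comp_const_add x t
  have hvy := (hv _ hyt).comp_const_add y t
  refine ((hux.mul hvy).sub (hvx.mul huy)).congr_deriv ?_
  field_simp
  ring

lemma tendsto_wronskian_add_atTop (hu : ∀ x, 0 < x → HasDerivAt u (v x) x)
    (hv : ∀ x, 0 < x → HasDerivAt v (-u x / x) x) {x y : ℝ} (hx : 0 < x) (hy : 0 < y) :
    Tendsto (fun t => u (x + t) * v (y + t) - v (x + t) * u (y + t)) atTop (𝓝 0) := by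
  obtain ⟨C, hC0, hCu, hCv⟩ := exists_abs_le_rpow_quarter hu hv
  have hbound : ∀ t, 1 ≤ t → |u (x + t) * v (y + t) - v (x + t) * u (y + t)|
      ≤ 2 * C ^ 2 * |y - x| / ((min x y + t) ^ (1 / 4 : ℝ)) ^ 2 := by
    intro t ht
    rcases le_total x y with hxy | hyx
    · rw [min_eq_left hxy, abs_of_nonneg (sub_nonneg.2 hxy)]
      convert abs_wronskian_le hu hv hC0 hCu hCv (a := x + t) (b := y + t) (by linarith)
        (by linarith) using 2
      ring
    · rw [min_eq_right hyx, abs_sub_comm y x, abs_of_nonneg (sub_nonneg.2 hyx), ← abs_neg]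
      convert abs_wronskian_le hu hv hC0 hCu hCv (a := y + t) (b := x + t) (by linarith)
        (by linarith) using 2 <;> ring
  have hdecay : Tendsto (fun t => 2 * C ^ 2 * |y - x| / ((min x y + t) ^ (1 / 4 : ℝ)) ^ 2)
      atTop (𝓝 0) :=
    tendsto_const_nhds.div_atTop <| (tendsto_pow_atTop two_ne_zero).comp <|
      (tendsto_rpow_atTop (by norm_num)).comp (tendsto_atTop_add_const_left _ _ tendsto_id)
  exact squeeze_zero_norm' (eventually_atTop.2 ⟨1, hbound⟩) hdecay

lemma integrableOn_kernel (hu : ∀ x, 0 < x → HasDerivAt u (v x) x)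
    (hv : ∀ x, 0 < x → HasDerivAt v (-u x / x) x) {x y : ℝ} (hx : 0 < x) (hy : 0 < y) :
    IntegrableOn (fun t => u (x + t) * u (y + t) / ((x + t) * (y + t))) (Ioi 0) := by
  obtain ⟨C, hC0, hCu, -⟩ := exists_abs_le_rpow_quarter hu hv
  have hcont : ContinuousOn (fun t => u (x + t) * u (y + t) / ((x + t) * (y + t))) (Ici 0) :=
    fun t (ht : 0 ≤ t) => ContinuousAt.continuousWithinAt <|
      (((hu _ (by linarith)).comp_const_add x t).continuousAt.mul
        ((hu _ (by linarith)).comp_const_add y t).continuousAt).div (by fun_prop)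
        (by positivity)
  have hO : (fun t => u (x + t) * u (y + t) / ((x + t) * (y + t))) =O[atTop]
      fun t => t ^ (-(3 / 2) : ℝ) := by
    refine Asymptotics.IsBigO.of_bound (C ^ 2) (eventually_atTop.2 ⟨1, fun t ht => ?_⟩)
    have hq : 0 < t ^ (1 / 4 : ℝ) := rpow_pos_of_pos (by linarith) _
    have h32 : t ^ (-(3 / 2) : ℝ) = 1 / (t ^ (1 / 4 : ℝ)) ^ 6 := by
      rw [rpow_neg (by linarith), ← rpow_mul_natCast (by linarith)]; norm_num
    rw [norm_eq_abs, norm_eq_abs, h32, mul_div_mul_comm, abs_mul,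
      abs_of_pos (by positivity : (0 : ℝ) < 1 / (t ^ (1 / 4 : ℝ)) ^ 6)]
    calc |u (x + t) / (x + t)| * |u (y + t) / (y + t)|
        ≤ C / (t ^ (1 / 4 : ℝ)) ^ 3 * (C / (t ^ (1 / 4 : ℝ)) ^ 3) := by
          gcongr
          · exact abs_div_self_le hC0 hCu ht (by linarith)
          · exact abs_div_self_le hC0 hCu ht (by linarith)
      _ = C ^ 2 * (1 / (t ^ (1 / 4 : ℝ)) ^ 6) := by field_simp
  exact ((hcont.locallyIntegrableOn measurableSet_Ici).integrableOn_of_isBigO_atTop hO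
    (integrableAtFilter_rpow_atTop_iff.2 (by norm_num))).mono_set Ioi_subset_Ici_self

theorem integral_kernel_eq (hu : ∀ x, 0 < x → HasDerivAt u (v x) x)
    (hv : ∀ x, 0 < x → HasDerivAt v (-u x / x) x) {x y : ℝ} (hx : 0 < x) (hy : 0 < y)
    (hxy : x ≠ y) :
    ∫ t in Ioi 0, u (x + t) * u (y + t) / ((x + t) * (y + t)) =
      (u x * v y - v x * u y) / (x - y) := by
  have hyx : y - x ≠ 0 := sub_ne_zero.2 hxy.symm
  have hftc := integral_Ioi_of_hasDerivAt_of_tendsto'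
    (f := fun t => (u (x + t) * v (y + t) - v (x + t) * u (y + t)) / (y - x))
    (fun t (ht : 0 ≤ t) => ((hasDerivAt_wronskian_add hu hv (by linarith) (by linarith)).div_const
      (y - x)).congr_deriv (mul_div_cancel_left₀ _ hyx))
    (integrableOn_kernel hu hv hx hy)
    (by simpa using (tendsto_wronskian_add_atTop hu hv hx hy).div_const (y - x))
  rw [hftc, ← neg_sub x y, add_zero, add_zero, div_neg, zero_sub, neg_neg]

noncomputable def besselU (x : ℝ) : ℝ :=
  ∑' k : ℕ, (-1 : ℝ) ^ k * x ^ (k + 1) / ((k ! : ℝ) * ((k + 1)! : ℝ))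

/-- The series of `J₀(2√x)`. -/
noncomputable def besselV (x : ℝ) : ℝ :=
  ∑' k : ℕ, (-1 : ℝ) ^ k * x ^ k / ((k ! : ℝ) * (k ! : ℝ))

lemma hasDerivAt_besselU (x : ℝ) : HasDerivAt besselU (besselV x) x := by
  have hcoeff (k : ℕ) : ‖(-1 : ℝ) ^ k / ((k ! : ℝ) * ((k + 1)! : ℝ))‖ ≤ 1 / ((k + 1)! : ℝ) := by
    rw [norm_div, norm_pow, norm_neg, norm_one, one_pow, norm_mul, RCLike.norm_natCast,
      RCLike.norm_natCast, mul_comm]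
    gcongr
    exact le_mul_of_one_le_right (by positivity) (by exact_mod_cast k.factorial_pos)
  have hU : besselU =
      fun z => ∑' k : ℕ, (-1 : ℝ) ^ k / ((k ! : ℝ) * ((k + 1)! : ℝ)) * z ^ (k + 1) :=
    funext fun z => tsum_congr fun k => by ring
  rw [hU]
  refine (hasDerivAt_tsum_mul_pow_succ hcoeff x).congr_deriv (tsum_congr fun k => ?_)
  rw [Nat.factorial_succ]; push_cast; field_simp

lemma hasDerivAt_besselV {x : ℝ} (hx : x ≠ 0) : HasDerivAt besselV (-besselU x / x) x := by
  have hcoeff (k : ℕ) : ‖(-1 : ℝ) ^ k / ((k ! : ℝ) * (k ! : ℝ))‖ ≤ 1 / (k ! : ℝ) := by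
    rw [norm_div, norm_pow, norm_neg, norm_one, one_pow, norm_mul, RCLike.norm_natCast]
    gcongr
    exact le_mul_of_one_le_right (by positivity) (by exact_mod_cast k.factorial_pos)
  have hV : besselV = fun z => ∑' k : ℕ, (-1 : ℝ) ^ k / ((k ! : ℝ) * (k ! : ℝ)) * z ^ k :=
    funext fun z => tsum_congr fun k => by ring
  rw [hV]
  refine (hasDerivAt_tsum_mul_pow hcoeff x).congr_deriv ?_
  rw [eq_div_iff hx, besselU, ← tsum_mul_right, ← tsum_neg]
  refine tsum_congr fun k => ?_
  rw [Nat.factorial_succ]; push_cast; field_simp; ring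

end BesselKernel

/-- For `u(x) = Σ_{k≥0} (−1)^k x^{k+1}/(k!(k+1)!) = √x J₁(2√x)`, the
integrable kernel `(u(x)u′(y) − u′(x)u(y))/(x−y)` equals
`∫₀^∞ u(x+t)u(y+t)/((x+t)(y+t)) dt`. -/
theorem bessel_kernel_hankel_square
    (u : ℝ → ℝ)
    (hu : ∀ x : ℝ, u x = ∑' k : ℕ,
      (-1 : ℝ) ^ k * x ^ (k + 1) / ((k.factorial : ℝ) * ((k + 1).factorial : ℝ))) :
    ∀ x y : ℝ, 0 < x → 0 < y → x ≠ y →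
      (u x * deriv u y - deriv u x * u y) / (x - y) =
        ∫ t in Ioi (0 : ℝ), u (x + t) * u (y + t) / ((x + t) * (y + t)) := by
  obtain rfl : u = BesselKernel.besselU := funext hu
  intro x y hx hy hxy
  rw [(BesselKernel.hasDerivAt_besselU x).deriv, (BesselKernel.hasDerivAt_besselU y).deriv]
  exact (BesselKernel.integral_kernel_eq (fun z _ => BesselKernel.hasDerivAt_besselU z)
    (fun z hz => BesselKernel.hasDerivAt_besselV hz.ne') hx hy hxy).symm
end

section
/- For a nonnegative integer n let φ_n(x) = (n!)^{−1/2} (2π)^{−1/4} (−1)^n e^{x²/4} · dⁿ/dxⁿ ( e^{−x²/2} ) be the n-th Hermite function, and define H(x,y) = ( φ_n(x) φ_n′(y) − φ_n′(x) φ_n(y) )/(x−y) for x ≠ y. Then for all real x ≠ y the derivative d/ds H(x+s, y+s) at s = 0 exists and equals −( (x+y)/4 ) φ_n(x) φ_n(y). -/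
/-!
Write `φₙ(x) = c · hₙ(x) e^{-x²/4}` with `hₙ` the probabilists' Hermite polynomial. The Hermite
equation `hₙ'' = x hₙ' - n hₙ` becomes the Schrödinger equation `φₙ'' = V φₙ` with
`V(x) = x²/4 - n - 1/2`. For any solution of `φ'' = V φ`, the Wronskian
`W(s) = φ(x+s) φ'(y+s) - φ'(x+s) φ(y+s)` has `W'(0) = (V(y) - V(x)) φ(x) φ(y)`, while the
denominator `x - y` of the kernel is invariant under the diagonal shift; here
`(V(y) - V(x)) / (x - y) = -(x + y)/4`.
-/

open Real Polynomial

namespace Polynomial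

theorem derivative_hermite_succ (n : ℕ) :
    derivative (hermite (n + 1)) = (n + 1 : ℤ) • hermite n := by
  induction n with
  | zero => simp [hermite_succ, hermite_zero]
  | succ n ih =>
    rw [hermite_succ (n + 1), derivative_sub, derivative_mul, derivative_X, ih, derivative_smul,
      hermite_succ n]
    simp only [smul_eq_C_mul]
    push_cast
    simp only [C_add, C_1]
    ring

theorem derivative_derivative_hermite (n : ℕ) :
    derivative (derivative (hermite n)) = X * derivative (hermite n) - C (n : ℤ) * hermite n := by
  cases n with
  | zero => simp [hermite_zero]
  | succ n =>
    have h : derivative (hermite n) = X * hermite n - hermite (n + 1) := by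
      rw [hermite_succ]; ring
    rw [derivative_hermite_succ, derivative_smul, h]
    simp only [smul_eq_C_mul]
    push_cast
    simp only [C_add, C_1]
    ring

/-- `d/dt - t/2` is `d/dt` conjugated by the weight `e^{-t²/4}`. -/
theorem derivative_sub_half_X_mul_twice {p : ℝ[X]} {l : ℝ}
    (hp : derivative (derivative p) = X * derivative p - C l * p) :
    derivative (derivative p - C (1 / 2) * X * p) - C (1 / 2) * X * (derivative p - C (1 / 2) * X * p)
      = (C (1 / 4) * X ^ 2 - C (l + 1 / 2)) * p := by
  simp only [derivative_sub, derivative_mul, derivative_C, derivative_X, hp]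
  simp only [C_add]
  have h2 : (C (1 / 2) : ℝ[X]) * 2 = 1 := by rw [← C_ofNat, ← C_mul]; norm_num
  have h4 : (C (1 / 4) : ℝ[X]) = C (1 / 2) * C (1 / 2) := by rw [← C_mul]; norm_num
  linear_combination (-(X * derivative p)) * h2 - X ^ 2 * p * h4

end Polynomial

theorem hasDerivAt_eval_mul_exp_neg_sq_div_four (p : ℝ[X]) (x : ℝ) :
    HasDerivAt (fun t => p.eval t * exp (-(t ^ 2 / 4)))
      ((derivative p - C (1 / 2) * X * p).eval x * exp (-(x ^ 2 / 4))) x := by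
  have hexp : HasDerivAt (fun t => exp (-(t ^ 2 / 4))) (exp (-(x ^ 2 / 4)) * -(x / 2)) x := by
    refine (((hasDerivAt_pow 2 x).div_const 4).fun_neg.exp).congr_deriv ?_
    ring
  refine ((p.hasDerivAt x).mul hexp).congr_deriv ?_
  simp only [eval_sub, eval_mul, eval_C, eval_X]
  ring

theorem exp_mul_iteratedDeriv_gaussian (n : ℕ) (x : ℝ) :
    (-1 : ℝ) ^ n * exp (x ^ 2 / 4) * iteratedDeriv n (fun t : ℝ => exp (-t ^ 2 / 2)) x
      = aeval x (hermite n) * exp (-(x ^ 2 / 4)) := by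
  simp only [neg_div, iteratedDeriv_eq_iterate, deriv_gaussian_eq_hermite_mul_gaussian]
  have hsign : ((-1 : ℝ) ^ n) ^ 2 = 1 := by rw [← pow_mul]; exact Even.neg_one_pow ⟨n, by ring⟩
  have hexp : exp (x ^ 2 / 4) * exp (-(x ^ 2 / 2)) = exp (-(x ^ 2 / 4)) := by
    rw [← exp_add]; ring_nf
  linear_combination aeval x (hermite n) * exp (x ^ 2 / 4) * exp (-(x ^ 2 / 2)) * hsign
    + aeval x (hermite n) * hexp

section Wronskian

variable {φ φ' V : ℝ → ℝ}

theorem hasDerivAt_wronskian_comp_add (hφ : ∀ t, HasDerivAt φ (φ' t) t)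
    (hφ' : ∀ t, HasDerivAt φ' (V t * φ t) t) (x y : ℝ) :
    HasDerivAt (fun s => φ (x + s) * φ' (y + s) - φ' (x + s) * φ (y + s))
      ((V y - V x) * (φ x * φ y)) 0 := by
  have shift : ∀ {f : ℝ → ℝ} {f' : ℝ → ℝ}, (∀ t, HasDerivAt f (f' t) t) →
      ∀ a, HasDerivAt (fun s => f (a + s)) (f' a) 0 := fun hf a =>
    HasDerivAt.comp_const_add a 0 (by simpa using hf a)
  refine (((shift hφ x).mul (shift hφ' y)).sub ((shift hφ' x).mul (shift hφ y))).congr_deriv ?_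
  rw [add_zero, add_zero]
  ring

theorem hasDerivAt_wronskian_kernel_comp_add (hφ : ∀ t, HasDerivAt φ (φ' t) t)
    (hφ' : ∀ t, HasDerivAt φ' (V t * φ t) t) {H : ℝ → ℝ → ℝ}
    (hH : ∀ x y, x ≠ y → H x y = (φ x * φ' y - φ' x * φ y) / (x - y)) {x y : ℝ} (hxy : x ≠ y) :
    HasDerivAt (fun s => H (x + s) (y + s)) ((V y - V x) / (x - y) * (φ x * φ y)) 0 := by
  have hH_shift : (fun s => H (x + s) (y + s))
      = fun s => (φ (x + s) * φ' (y + s) - φ' (x + s) * φ (y + s)) / (x - y) := by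
    funext s
    rw [hH _ _ (by simpa using hxy), add_sub_add_right_eq_sub]
  rw [hH_shift]
  refine ((hasDerivAt_wronskian_comp_add hφ hφ' x y).div_const (x - y)).congr_deriv ?_
  ring

end Wronskian

/-- For the n-th Hermite function `φₙ`, the kernel
`H(x,y) = (φₙ(x)φₙ′(y) − φₙ′(x)φₙ(y))/(x−y)` has diagonal-direction derivative
`(∂/∂x + ∂/∂y)H(x,y) = −((x+y)/4) φₙ(x)φₙ(y)`. -/
theorem hermite_kernel_diagonal_derivative
    (n : ℕ) (φ : ℝ → ℝ)
    (hφ : ∀ x : ℝ, φ x = ((n.factorial : ℝ)) ^ (-(1 / 2 : ℝ)) *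
      (2 * Real.pi) ^ (-(1 / 4 : ℝ)) * (-1 : ℝ) ^ n * Real.exp (x ^ 2 / 4) *
        iteratedDeriv n (fun t : ℝ => Real.exp (-t ^ 2 / 2)) x)
    (H : ℝ → ℝ → ℝ)
    (hH : ∀ x y : ℝ, x ≠ y →
      H x y = (φ x * deriv φ y - deriv φ x * φ y) / (x - y)) :
    ∀ x y : ℝ, x ≠ y →
      HasDerivAt (fun s => H (x + s) (y + s)) (-((x + y) / 4) * (φ x * φ y)) 0 := by
  intro x y hxy
  set c : ℝ := (n.factorial : ℝ) ^ (-(1 / 2 : ℝ)) * (2 * π) ^ (-(1 / 4 : ℝ))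
  set P : ℝ[X] := C c * (hermite n).map (algebraMap ℤ ℝ)
  set Q : ℝ[X] := derivative P - C (1 / 2) * X * P
  have hφP : φ = fun t => P.eval t * exp (-(t ^ 2 / 4)) := funext fun t => by
    simp only [hφ t, P, eval_mul, eval_C, eval_map_algebraMap]
    linear_combination c * exp_mul_iteratedDeriv_gaussian n t
  have hP : derivative (derivative P) = X * derivative P - C (n : ℝ) * P := by
    simp only [P, derivative_C_mul, derivative_map, derivative_derivative_hermite, Polynomial.map_sub,
      Polynomial.map_mul, map_X, Polynomial.map_natCast, C_eq_natCast]
    ring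
  have hφ' : ∀ t, HasDerivAt φ (Q.eval t * exp (-(t ^ 2 / 4))) t := fun t =>
    hφP ▸ hasDerivAt_eval_mul_exp_neg_sq_div_four P t
  have hφ'' : ∀ t, HasDerivAt (fun t => Q.eval t * exp (-(t ^ 2 / 4)))
      ((t ^ 2 / 4 - (n + 1 / 2)) * φ t) t := fun t => by
    convert hasDerivAt_eval_mul_exp_neg_sq_div_four Q t using 1
    rw [derivative_sub_half_X_mul_twice hP, hφP]
    simp only [eval_mul, eval_sub, eval_C, eval_pow, eval_X]
    ring
  have hH' : ∀ x y, x ≠ y → H x y = (φ x * (Q.eval y * exp (-(y ^ 2 / 4)))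
      - Q.eval x * exp (-(x ^ 2 / 4)) * φ y) / (x - y) := by
    simpa only [fun t => (hφ' t).deriv] using hH
  convert hasDerivAt_wronskian_kernel_comp_add hφ' hφ'' hH' hxy using 1
  field_simp [sub_ne_zero.mpr hxy]
  ring
end
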